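/- arXiv:1905.13282 — 4 statements merged into one kernel-verified Lean document; each statement's English description precedes it below -/
import Mathlib

section
/- Let K ⊂ ℂ be a totally imaginary number field of degree 2d ≥ 4 and let l ∈ K[x₁,x₂,x₃] be a linear form with sufficiently general coefficients. Then the norm form f = N_{K/ℚ}(l) has exactly d zeros in real projective plane ℙ²(ℝ): they are the common projective zeros of the conjugate linear forms σ(l) and its coefficientwise complex conjugate, as σ ranges over the d conjugate pairs of embeddings of K into ℂ. -/
/-!
Over `ℂ` the norm form splits into the `2d` conjugate linear forms `σ(l)`, so a real point is a
zero of `f` iff it is a zero of some `σ(l)`. At a real point `σ̄(l)` takes the conjugate value of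
`σ(l)`, so the real zeros of `σ(l)` are common zeros of `σ(l)` and `σ̄(l)`. An `ℝ`-linear map
`ℝ³ → ℂ` has a nonzero kernel, so such a zero exists; if there were two independent ones, they would
span a complex plane on which `σ(l)` and `σ̄(l)` vanish, and a third conjugate form would vanish on
a line of it, against genericity. So `σ(l)` has exactly one real zero `P_σ ∈ ℙ²(ℝ)`, and by
genericity again `P_σ = P_τ` iff `τ ∈ {σ, σ̄}`, i.e. iff `σ` and `τ` give the same infinite place
of `K`. Hence the real zeros of `f` correspond to the `d` complex places of `K`.
-/

open MvPolynomial
open scoped LinearAlgebra.Projectivization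

theorem MvPolynomial.IsHomogeneous.exists_eq_sum_smul_X {R σ : Type*} [CommSemiring R]
    [Fintype σ] {p : MvPolynomial σ R} (hp : p.IsHomogeneous 1) :
    ∃ c : σ → R, ∑ i, c i • X i = p :=
  (Submodule.mem_span_range_iff_exists_fun R).mp
    (homogeneousSubmodule_one_eq_span_X (σ := σ) (R := R) ▸ hp)

theorem MvPolynomial.eval_map_sum_smul_X {R S σ : Type*} [CommSemiring R] [CommSemiring S]
    [Fintype σ] (f : R →+* S) (c : σ → R) (z : σ → S) :
    eval z (map f (∑ i, c i • X i)) = (f ∘ c) ⬝ᵥ z := by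
  simp [smul_eq_C_mul, dotProduct]

theorem MvPolynomial.eval_map_real_eq_zero_iff_of_map_eq_finprod {σ α : Type*} [Fintype α]
    {f : MvPolynomial σ ℚ} {g : α → MvPolynomial σ ℂ}
    (hf : map (algebraMap ℚ ℂ) f = ∏ᶠ a, g a) (v : σ → ℝ) :
    eval v (map (algebraMap ℚ ℝ) f) = 0 ↔ ∃ a, eval (fun i => (v i : ℂ)) (g a) = 0 := by
  have hC : algebraMap ℚ ℂ = Complex.ofRealHom.comp (algebraMap ℚ ℝ) := Subsingleton.elim _ _
  have hv :
      ((eval v (map (algebraMap ℚ ℝ) f) : ℝ) : ℂ) = ∏ a, eval (fun i => (v i : ℂ)) (g a) := by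
    rw [← finprod_eq_prod_of_fintype, ← map_finprod _ (Set.toFinite _), ← hf, eval_map, eval_map,
      hC]
    exact eval₂_comp_left Complex.ofRealHom (algebraMap ℚ ℝ) v f
  rw [← Complex.ofReal_eq_zero, hv, Finset.prod_eq_zero_iff]
  simp

theorem Complex.ofReal_comp_ne_zero {ι : Type*} {v : ι → ℝ} (hv : v ≠ 0) :
    (fun i => (v i : ℂ)) ≠ 0 :=
  fun h => hv (funext fun i => by simpa using congrFun h i)

theorem LinearIndependent.ofReal_pair {ι : Type*} {v w : ι → ℝ}
    (h : LinearIndependent ℝ ![v, w]) {α β : ℂ}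
    (hαβ : α • (fun i => (v i : ℂ)) + β • (fun i => (w i : ℂ)) = 0) :
    α = 0 ∧ β = 0 := by
  rw [LinearIndependent.pair_iff] at h
  have hre := h α.re β.re (funext fun i => by simpa using congrArg Complex.re (congrFun hαβ i))
  have him := h α.im β.im (funext fun i => by simpa using congrArg Complex.im (congrFun hαβ i))
  exact ⟨Complex.ext hre.1 him.1, Complex.ext hre.2 him.2⟩

section RealZeros

variable {ι : Type*} [Fintype ι]

theorem star_dotProduct_ofReal (a : ι → ℂ) (v : ι → ℝ) :
    star a ⬝ᵥ (fun i => (v i : ℂ)) = starRingEnd ℂ (a ⬝ᵥ fun i => (v i : ℂ)) := by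
  simp [dotProduct, mul_comm]

theorem dotProduct_ofReal_smul (a : ι → ℂ) (t : ℝ) (v : ι → ℝ) :
    a ⬝ᵥ (fun i => ((t • v) i : ℂ)) = t * a ⬝ᵥ fun i => (v i : ℂ) := by
  simp [dotProduct, Finset.mul_sum, mul_left_comm]

theorem exists_ne_zero_dotProduct_ofReal_eq_zero (a : ι → ℂ) (hι : 2 < Fintype.card ι) :
    ∃ v : ι → ℝ, v ≠ 0 ∧ a ⬝ᵥ (fun i => (v i : ℂ)) = 0 := by
  let T : (ι → ℝ) →ₗ[ℝ] ℂ := ∑ i, a i • (Complex.ofRealLI.toLinearMap ∘ₗ LinearMap.proj i)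
  have hT : LinearMap.ker T ≠ ⊥ := LinearMap.ker_ne_bot_of_finrank_lt (by simpa using hι)
  obtain ⟨v, hv, hv0⟩ := (Submodule.ne_bot_iff _).mp hT
  exact ⟨v, hv0, by simpa [T, dotProduct] using hv⟩

theorem not_linearIndependent_of_dotProduct_ofReal_eq_zero {a b c : ι → ℂ}
    (hgen : ∀ z : ι → ℂ, z ≠ 0 → ¬ (a ⬝ᵥ z = 0 ∧ b ⬝ᵥ z = 0 ∧ c ⬝ᵥ z = 0))
    {v w : ι → ℝ} (hv : v ≠ 0)
    (hav : a ⬝ᵥ (fun i => (v i : ℂ)) = 0) (hbv : b ⬝ᵥ (fun i => (v i : ℂ)) = 0)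
    (haw : a ⬝ᵥ (fun i => (w i : ℂ)) = 0) (hbw : b ⬝ᵥ (fun i => (w i : ℂ)) = 0) :
    ¬ LinearIndependent ℝ ![v, w] := by
  intro hvw
  set v' : ι → ℂ := fun i => (v i : ℂ)
  set w' : ι → ℂ := fun i => (w i : ℂ)
  -- the combination of `v` and `w` killed by `c`; it is also killed by `a` and `b`
  set u := (c ⬝ᵥ w') • v' + (-(c ⬝ᵥ v')) • w'
  have hu : u = 0 := by
    by_contra hu
    refine hgen u hu ⟨?_, ?_, ?_⟩ <;>
      simp only [u, dotProduct_add, dotProduct_smul, smul_eq_mul, hav, hbv, haw, hbw] <;> ring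
  obtain ⟨-, hcv⟩ := hvw.ofReal_pair hu
  exact hgen v' (Complex.ofReal_comp_ne_zero hv) ⟨hav, hbv, neg_eq_zero.mp hcv⟩

namespace Projectivization

theorem exists_dotProduct_ofReal_rep_eq_zero (a : ι → ℂ) (hι : 2 < Fintype.card ι) :
    ∃ P : ℙ ℝ (ι → ℝ), a ⬝ᵥ (fun i => (P.rep i : ℂ)) = 0 := by
  obtain ⟨v, hv, hav⟩ := exists_ne_zero_dotProduct_ofReal_eq_zero a hι
  obtain ⟨t, ht⟩ := exists_smul_eq_mk_rep ℝ v hv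
  exact ⟨mk ℝ v hv, by rw [← ht, Units.smul_def, dotProduct_ofReal_smul, hav, mul_zero]⟩

theorem eq_of_dotProduct_ofReal_rep_eq_zero {a b c : ι → ℂ}
    (hgen : ∀ z : ι → ℂ, z ≠ 0 → ¬ (a ⬝ᵥ z = 0 ∧ b ⬝ᵥ z = 0 ∧ c ⬝ᵥ z = 0))
    {P Q : ℙ ℝ (ι → ℝ)}
    (haP : a ⬝ᵥ (fun i => (P.rep i : ℂ)) = 0) (hbP : b ⬝ᵥ (fun i => (P.rep i : ℂ)) = 0)
    (haQ : a ⬝ᵥ (fun i => (Q.rep i : ℂ)) = 0) (hbQ : b ⬝ᵥ (fun i => (Q.rep i : ℂ)) = 0) :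
    P = Q := by
  by_contra hPQ
  refine not_linearIndependent_of_dotProduct_ofReal_eq_zero hgen P.rep_nonzero haP hbP haQ hbQ ?_
  refine (LinearIndependent.pair_iff' P.rep_nonzero).mpr fun t ht => hPQ ?_
  rw [← P.mk_rep, ← Q.mk_rep, eq_comm, mk_eq_mk_iff' _ _ _ Q.rep_nonzero P.rep_nonzero]
  exact ⟨t, ht⟩

end Projectivization

end RealZeros

namespace NumberField

variable {K : Type*} [Field K]

theorem isTotallyComplex_of_isEmpty (h : IsEmpty (K →+* ℝ)) : IsTotallyComplex K :=
  ⟨fun _ => InfinitePlace.not_isReal_iff_isComplex.mp fun hw =>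
    h.elim (InfinitePlace.isReal_iff.mp hw).embedding⟩

theorem ComplexEmbedding.conjugate_ne_self [IsTotallyComplex K] (σ : K →+* ℂ) :
    ComplexEmbedding.conjugate σ ≠ σ :=
  mt ComplexEmbedding.isReal_iff.mpr (IsTotallyComplex.complexEmbedding_not_isReal σ)

theorem InfinitePlace.two_mul_card_eq_finrank [NumberField K] [IsTotallyComplex K] :
    2 * Nat.card (InfinitePlace K) = Module.finrank ℚ K := by
  rw [Nat.card_eq_fintype_card, card_eq_nrRealPlaces_add_nrComplexPlaces,
    IsTotallyComplex.nrRealPlaces_eq_zero, zero_add, IsTotallyComplex.finrank]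

theorem InfinitePlace.card_range_eq_card {X : Type*} {P : (K →+* ℂ) → X}
    (hP : ∀ σ τ, P σ = P τ ↔ mk σ = mk τ) :
    Nat.card (Set.range P) = Nat.card (InfinitePlace K) := by
  have hrange : Set.range P = Set.range (P ∘ embedding) := by
    refine le_antisymm (fun _ ⟨σ, hσ⟩ => ⟨mk σ, ?_⟩) (Set.range_comp_subset_range _ _)
    rw [← hσ, Function.comp_apply, hP, mk_embedding]
  have hinj : Function.Injective (P ∘ embedding) := fun w w' h => by
    rwa [Function.comp_apply, Function.comp_apply, hP, mk_embedding, mk_embedding] at h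
  rw [hrange, Nat.card_range_of_injective hinj]

end NumberField

section SufficientlyGeneral

open NumberField

variable {K : Type*} [Field K] {ι : Type*} [Fintype ι]

theorem NumberField.ComplexEmbedding.conjugate_comp_dotProduct_ofReal (σ : K →+* ℂ) (c : ι → K)
    (v : ι → ℝ) :
    (conjugate σ ∘ c) ⬝ᵥ (fun i => (v i : ℂ)) = starRingEnd ℂ ((σ ∘ c) ⬝ᵥ fun i => (v i : ℂ)) :=
  star_dotProduct_ofReal _ _

-- `c` is the coefficient vector of the linear form `∑ i, c i • X i`.
def IsSufficientlyGeneral (c : ι → K) : Prop :=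
  ∀ σ₁ σ₂ σ₃ : K →+* ℂ, σ₁ ≠ σ₂ → σ₁ ≠ σ₃ → σ₂ ≠ σ₃ → ∀ z : ι → ℂ, z ≠ 0 →
    ¬ ((σ₁ ∘ c) ⬝ᵥ z = 0 ∧ (σ₂ ∘ c) ⬝ᵥ z = 0 ∧ (σ₃ ∘ c) ⬝ᵥ z = 0)

variable [IsTotallyComplex K] {c : ι → K}

theorem IsSufficientlyGeneral.existsUnique_real_zero (hc : IsSufficientlyGeneral c)
    (hK : 3 ≤ ENat.card (K →+* ℂ)) (hι : 2 < Fintype.card ι) (σ : K →+* ℂ) :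
    ∃ P : ℙ ℝ (ι → ℝ), ∀ Q : ℙ ℝ (ι → ℝ), (σ ∘ c) ⬝ᵥ (fun i => (Q.rep i : ℂ)) = 0 ↔ Q = P := by
  obtain ⟨P, hP⟩ := Projectivization.exists_dotProduct_ofReal_rep_eq_zero (σ ∘ c) hι
  obtain ⟨ρ, hρσ, hρσ'⟩ := ENat.exists_ne_ne_of_three_le hK σ (ComplexEmbedding.conjugate σ)
  have hconj {Q : ℙ ℝ (ι → ℝ)} (hQ : (σ ∘ c) ⬝ᵥ (fun i => (Q.rep i : ℂ)) = 0) :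
      (ComplexEmbedding.conjugate σ ∘ c) ⬝ᵥ (fun i => (Q.rep i : ℂ)) = 0 := by
    rw [ComplexEmbedding.conjugate_comp_dotProduct_ofReal, hQ, map_zero]
  have hσρ := hc σ _ ρ (ComplexEmbedding.conjugate_ne_self σ).symm hρσ.symm hρσ'.symm
  refine ⟨P, fun Q => ⟨fun hQ => ?_, fun hQP => hQP ▸ hP⟩⟩
  exact Projectivization.eq_of_dotProduct_ofReal_rep_eq_zero hσρ hQ (hconj hQ) hP (hconj hP)

theorem IsSufficientlyGeneral.real_zero_eq_iff (hc : IsSufficientlyGeneral c)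
    {P : (K →+* ℂ) → ℙ ℝ (ι → ℝ)}
    (hP : ∀ (σ : K →+* ℂ) (Q : ℙ ℝ (ι → ℝ)), (σ ∘ c) ⬝ᵥ (fun i => (Q.rep i : ℂ)) = 0 ↔ Q = P σ)
    (σ τ : K →+* ℂ) :
    P σ = P τ ↔ InfinitePlace.mk σ = InfinitePlace.mk τ := by
  have hPσ := (hP σ (P σ)).mpr rfl
  have hPσ' : (ComplexEmbedding.conjugate σ ∘ c) ⬝ᵥ (fun i => ((P σ).rep i : ℂ)) = 0 := by
    rw [ComplexEmbedding.conjugate_comp_dotProduct_ofReal, hPσ, map_zero]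
  rw [InfinitePlace.mk_eq_iff]
  constructor
  · intro hστ
    by_contra! hne
    exact hc σ _ τ (ComplexEmbedding.conjugate_ne_self σ).symm hne.1 hne.2 _
      (Complex.ofReal_comp_ne_zero (P σ).rep_nonzero) ⟨hPσ, hPσ', (hP τ _).mpr hστ⟩
  · rintro (rfl | rfl)
    · rfl
    · exact (hP _ _).mp hPσ'

end SufficientlyGeneral

/-- Let `K ⊂ ℂ` be a totally imaginary number field of degree `2d ≥ 4` and let
`l ∈ K[x₁,x₂,x₃]` be a linear form with sufficiently general coefficients. Then
the norm form `f = N_{K/ℚ}(l)` has exactly `d` zeros in the real projective plane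
`ℙ²(ℝ)`, namely the common projective zeros of a conjugate form `σ(l)` and its
coefficientwise complex conjugate `conj ∘ σ(l)`. -/
theorem statement5 (d : ℕ) (hd : 2 ≤ d) (K : IntermediateField ℚ ℂ)
    (hdeg : Module.finrank ℚ K = 2 * d)
    (himag : IsEmpty (K →+* ℝ))
    (l : MvPolynomial (Fin 3) K) (hl : l.IsHomogeneous 1)
    (hgen : ∀ σ₁ σ₂ σ₃ : K →+* ℂ, σ₁ ≠ σ₂ → σ₁ ≠ σ₃ → σ₂ ≠ σ₃ →
      ∀ v : Fin 3 → ℂ, v ≠ 0 →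
        ¬ (eval v (map σ₁ l) = 0 ∧ eval v (map σ₂ l) = 0 ∧ eval v (map σ₃ l) = 0))
    (f : MvPolynomial (Fin 3) ℚ)
    (hf : map (algebraMap ℚ ℂ) f = ∏ᶠ σ : K →+* ℂ, map σ l) :
    Nat.card {P : Projectivization ℝ (Fin 3 → ℝ) |
        eval P.rep (map (algebraMap ℚ ℝ) f) = 0} = d ∧
    {P : Projectivization ℝ (Fin 3 → ℝ) | eval P.rep (map (algebraMap ℚ ℝ) f) = 0} =
      {P : Projectivization ℝ (Fin 3 → ℝ) | ∃ σ : K →+* ℂ,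
        eval (fun i => (P.rep i : ℂ)) (map σ l) = 0 ∧
        eval (fun i => (P.rep i : ℂ)) (map ((starRingEnd ℂ).comp σ) l) = 0} := by
  have : FiniteDimensional ℚ K := .of_finrank_pos (by omega)
  have : NumberField K := ⟨⟩
  have := NumberField.isTotallyComplex_of_isEmpty himag
  obtain ⟨c, rfl⟩ := hl.exists_eq_sum_smul_X
  have hc : IsSufficientlyGeneral c := fun σ₁ σ₂ σ₃ h₁₂ h₁₃ h₂₃ z hz => by
    simpa only [eval_map_sum_smul_X] using hgen σ₁ σ₂ σ₃ h₁₂ h₁₃ h₂₃ z hz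
  have hK : 3 ≤ ENat.card (K →+* ℂ) := by
    rw [ENat.card_eq_coe_fintype_card, NumberField.Embeddings.card, hdeg]
    exact_mod_cast (by omega : 3 ≤ 2 * d)
  choose P hP using hc.existsUnique_real_zero hK (by simp)
  have hzero : {Q | eval Q.rep (map (algebraMap ℚ ℝ) f) = 0} = Set.range P := by
    ext Q
    simp only [Set.mem_ofPred_eq, eval_map_real_eq_zero_iff_of_map_eq_finprod hf,
      eval_map_sum_smul_X, hP, Set.mem_range, eq_comm]
  refine ⟨?_, ?_⟩
  · have := NumberField.InfinitePlace.two_mul_card_eq_finrank (K := K)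
    rw [hzero, NumberField.InfinitePlace.card_range_eq_card (hc.real_zero_eq_iff hP)]
    omega
  · rw [hzero]
    ext Q
    simp only [Set.mem_range, Set.mem_ofPred_eq, eval_map_sum_smul_X, hP]
    refine ⟨fun ⟨σ, hσ⟩ => ⟨σ, hσ.symm, hσ.symm.trans ?_⟩, fun ⟨σ, hσ, _⟩ => ⟨σ, hσ.symm⟩⟩
    exact ((hc.real_zero_eq_iff hP _ σ).mpr (NumberField.InfinitePlace.mk_conjugate_eq σ)).symm
end

section
/- Let f ∈ ℝ[x₁,…,xₙ] be a form of degree 2d admitting two sum of squares representations f = Σᵢ₌₁ʳ pᵢ² = Σᵢ₌₁ʳ qᵢ² (by forms of degree d) that are not orthogonally equivalent, and such that span(p₁,…,p_r) = span(q₁,…,q_r) =: U. Then f has another sum of squares representation f = Σⱼ₌₁ˢ uⱼ² for which span(u₁,…,u_s) is a proper subspace of U. -/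
open Matrix MvPolynomial

set_option maxHeartbeats 1000000
set_option synthInstance.maxHeartbeats 400000

private lemma sum_sq_mulVec {r m : ℕ} (C : Matrix (Fin r) (Fin m) ℝ) (x : Fin m → ℝ) :
    ∑ i, (C *ᵥ x) i ^ 2 = x ⬝ᵥ ((Cᵀ * C) *ᵥ x) := by
  rw [← Matrix.mulVec_mulVec, Matrix.dotProduct_mulVec, Matrix.vecMul_transpose]
  simp [dotProduct, pow_two]

private lemma gram_eq_orth {r m : ℕ} (C D : Matrix (Fin r) (Fin m) ℝ)
    (hpd : (Cᵀ * C).PosDef) (h : Cᵀ * C = Dᵀ * D) :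
    ∃ A : Matrix (Fin r) (Fin r) ℝ, A * Aᵀ = 1 ∧ D = A * C := by
  classical
  set V := EuclideanSpace ℝ (Fin r) with hV
  let eV := WithLp.linearEquiv 2 ℝ (Fin r → ℝ)
  let fC : (Fin m → ℝ) →ₗ[ℝ] V := eV.symm.toLinearMap ∘ₗ C.mulVecLin
  let fD : (Fin m → ℝ) →ₗ[ℝ] V := eV.symm.toLinearMap ∘ₗ D.mulVecLin
  have hfCapp : ∀ x, fC x = eV.symm (C *ᵥ x) := fun x => rfl
  have hfDapp : ∀ x, fD x = eV.symm (D *ᵥ x) := fun x => rfl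
  -- norms
  have hnormC : ∀ x, ‖fC x‖ ^ 2 = x ⬝ᵥ ((Cᵀ * C) *ᵥ x) := by
    intro x
    rw [← sum_sq_mulVec]
    rw [hfCapp, EuclideanSpace.norm_eq, Real.sq_sqrt (by positivity)]
    simp [eV, WithLp.linearEquiv_symm_apply, PiLp.toLp_apply, sq_abs]
  have hnormD : ∀ x, ‖fD x‖ ^ 2 = x ⬝ᵥ ((Dᵀ * D) *ᵥ x) := by
    intro x
    rw [← sum_sq_mulVec]
    rw [hfDapp, EuclideanSpace.norm_eq, Real.sq_sqrt (by positivity)]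
    simp [eV, WithLp.linearEquiv_symm_apply, PiLp.toLp_apply, sq_abs]
  have hnorm : ∀ x, ‖fC x‖ = ‖fD x‖ := by
    intro x
    have : ‖fC x‖ ^ 2 = ‖fD x‖ ^ 2 := by rw [hnormC, hnormD, h]
    have := congrArg Real.sqrt this
    rwa [Real.sqrt_sq (norm_nonneg _), Real.sqrt_sq (norm_nonneg _)] at this
  -- injectivity of fC
  have hCinj : Function.Injective fC := by
    intro x y hxy
    have hz : fC (x - y) = 0 := by rw [map_sub, hxy, sub_self]
    by_contra hne
    have hxy0 : x - y ≠ 0 := sub_ne_zero.mpr (fun hh => hne (by rwa [] at hh))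
    have hpos := hpd.dotProduct_mulVec_pos hxy0
    rw [star_trivial] at hpos
    have : ‖fC (x - y)‖ ^ 2 = 0 := by rw [hz]; simp
    rw [hnormC] at this
    rw [this] at hpos
    exact lt_irrefl _ hpos
  set SC := LinearMap.range fC with hSC
  let eC : (Fin m → ℝ) ≃ₗ[ℝ] SC := LinearEquiv.ofInjective fC hCinj
  have heC : ∀ x, (eC x : V) = fC x := fun x => rfl
  let L : SC →ₗᵢ[ℝ] V :=
    { toLinearMap := fD ∘ₗ eC.symm.toLinearMap
      norm_map' := by
        intro s
        obtain ⟨x, rfl⟩ : ∃ x, eC x = s := ⟨eC.symm s, by simp⟩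
        simp only [LinearMap.coe_comp, Function.comp_apply, LinearEquiv.coe_coe,
          LinearEquiv.symm_apply_apply]
        rw [← hnorm x, ← heC x]
        rfl }
  let ℒ : V →ₗᵢ[ℝ] V := L.extend
  have hext : ∀ x, ℒ (fC x) = fD x := by
    intro x
    have := L.extend_apply (eC x)
    rw [heC x] at this
    rw [this]
    show fD (eC.symm (eC x)) = fD x
    rw [LinearEquiv.symm_apply_apply]
  -- the orthogonal matrix
  let A : Matrix (Fin r) (Fin r) ℝ :=
    Matrix.of fun i j => eV (ℒ (eV.symm (Pi.single j 1))) i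
  have hexpand : ∀ y : Fin r → ℝ, eV.symm y = ∑ j, y j • eV.symm (Pi.single j 1) := by
    intro y
    apply eV.injective
    rw [map_sum]
    simp only [LinearEquiv.apply_symm_apply, _root_.map_smul]
    funext i
    simp [Pi.single_apply, Finset.sum_ite_eq']
  have hAapp : ∀ y : Fin r → ℝ, (A *ᵥ y) = eV (ℒ (eV.symm y)) := by
    intro y
    funext i
    rw [hexpand y, map_sum, map_sum]
    simp only [_root_.map_smul]
    rw [Finset.sum_apply]
    simp only [Matrix.mulVec, dotProduct]
    congr 1
    funext j
    simp [A, mul_comm]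
  refine ⟨A, ?_, ?_⟩
  · -- orthogonality
    rw [mul_eq_one_comm]
    ext j j'
    have hinner : ∀ a b : V, (inner ℝ a b : ℝ) = ∑ i, eV a i * eV b i := by
      intro a b
      rw [PiLp.inner_apply]
      simp [eV, RCLike.inner_apply, mul_comm]
    have h1 : (Aᵀ * A) j j' = ∑ i, A i j * A i j' := by
      simp [Matrix.mul_apply, Matrix.transpose_apply]
    have h2 : ∑ i, A i j * A i j' =
        (inner ℝ (ℒ (eV.symm (Pi.single j 1))) (ℒ (eV.symm (Pi.single j' 1))) : ℝ) := by
      rw [hinner]; rfl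
    rw [h1, h2, ℒ.inner_map_map, hinner]
    simp only [LinearEquiv.apply_symm_apply]
    by_cases hjj : j = j'
    · subst hjj
      simp [Pi.single_apply, Finset.sum_ite_eq]
    · simp [Pi.single_apply, Finset.sum_ite_eq, hjj, Matrix.one_apply, Ne.symm hjj]
  · -- D = A * C
    ext i k
    have h3 : (A *ᵥ (C *ᵥ Pi.single k 1)) = D *ᵥ Pi.single k 1 := by
      rw [hAapp]
      have : eV.symm (C *ᵥ Pi.single k 1) = fC (Pi.single k 1) := rfl
      rw [this, hext]
      rw [hfDapp, LinearEquiv.apply_symm_apply]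
    have h4 := congrFun h3 i
    rw [Matrix.mulVec_mulVec] at h4
    rw [Matrix.mulVec_single, Matrix.mulVec_single] at h4
    simpa using h4.symm


open scoped MatrixOrder in
private lemma line_singular {m : ℕ} (Gp Gq : Matrix (Fin m) (Fin m) ℝ)
    (hGp : Gp.PosDef) (hGqt : Gqᵀ = Gq) (hne : Gp ≠ Gq) :
    ∃ (t : ℝ) (v : Fin m → Fin m → ℝ) (ξ : Fin m → ℝ), ξ ≠ 0 ∧
      (∀ j, ∑ k, v j k * ξ k = 0) ∧
      ∀ k l, Gp k l + t * (Gq k l - Gp k l) = ∑ j, v j k * v j l := by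
  classical
  have hGpt : Gpᵀ = Gp := by
    have := hGp.1
    rwa [Matrix.IsHermitian, conjTranspose_eq_transpose_of_trivial] at this
  set S := CFC.sqrt Gp with hSdef
  have hSS : S * S = Gp := CFC.sqrt_mul_sqrt_self Gp hGp.posSemidef.nonneg
  have hSH : S.IsHermitian := (CFC.sqrt_nonneg Gp).posSemidef.1
  have hSt : Sᵀ = S := by
    rwa [Matrix.IsHermitian, conjTranspose_eq_transpose_of_trivial] at hSH
  have hSsym : ∀ a b, S a b = S b a := by
    intro a b; conv_lhs => rw [← hSt, Matrix.transpose_apply]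
  have hdetS : IsUnit S.det := by
    have h1 : S.det * S.det = Gp.det := by rw [← Matrix.det_mul, hSS]
    have h2 : (0:ℝ) < Gp.det := hGp.det_pos
    have : S.det ≠ 0 := by
      intro h0; rw [h0, mul_zero] at h1; exact (lt_irrefl _ (h1 ▸ h2)).elim
    exact isUnit_iff_ne_zero.mpr this
  set R := S⁻¹ with hRdef
  have hSR : S * R = 1 := Matrix.mul_nonsing_inv S hdetS
  have hRS : R * S = 1 := Matrix.nonsing_inv_mul S hdetS
  have hRt : Rᵀ = R := by rw [hRdef, Matrix.transpose_nonsing_inv, hSt]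
  set Δ := Gq - Gp with hΔdef
  have hΔt : Δᵀ = Δ := by rw [hΔdef, Matrix.transpose_sub, hGqt, hGpt]
  have hΔne : Δ ≠ 0 := sub_ne_zero.mpr (Ne.symm hne)
  set B := R * Δ * R with hBdef
  have hBt : Bᵀ = B := by
    rw [hBdef, Matrix.transpose_mul, Matrix.transpose_mul, hRt, hΔt, Matrix.mul_assoc]
  have hBH : B.IsHermitian := by
    rw [Matrix.IsHermitian, conjTranspose_eq_transpose_of_trivial, hBt]
  have hSBS : S * B * S = Δ := by
    have : S * (R * Δ * R) * S = (S * R) * Δ * (R * S) := by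
      simp only [Matrix.mul_assoc]
    rw [hBdef, this, hSR, hRS, Matrix.one_mul, Matrix.mul_one]
  have hBne : B ≠ 0 := by
    intro h0
    apply hΔne
    rw [← hSBS, h0, Matrix.mul_zero, Matrix.zero_mul]
  -- spectral decomposition of B
  set U : Matrix (Fin m) (Fin m) ℝ := (hBH.eigenvectorUnitary : Matrix (Fin m) (Fin m) ℝ)
    with hUdef
  set μ := hBH.eigenvalues with hμdef
  have hUU : U * Uᵀ = 1 := by
    have := Matrix.mem_unitaryGroup_iff.mp (hBH.eigenvectorUnitary).2
    rwa [Matrix.star_eq_conjTranspose, conjTranspose_eq_transpose_of_trivial] at this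
  have hUtU : Uᵀ * U = 1 := mul_eq_one_comm.mp hUU
  set w : Fin m → Fin m → ℝ := fun i k => U k i with hwdef
  have complete : ∀ k l, ∑ i, w i k * w i l = (1 : Matrix (Fin m) (Fin m) ℝ) k l := by
    intro k l
    rw [← hUU]
    simp [Matrix.mul_apply, hwdef]
  have orth : ∀ i i', ∑ k, w i k * w i' k = (1 : Matrix (Fin m) (Fin m) ℝ) i i' := by
    intro i i'
    rw [← hUtU]
    simp [Matrix.mul_apply, hwdef]
  have decompB : ∀ k l, B k l = ∑ i, μ i * (w i k * w i l) := by
    intro k l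
    conv_lhs => rw [hBH.spectral_theorem]
    rw [Unitary.conjStarAlgAut_apply]
    rw [Matrix.star_eq_conjTranspose, conjTranspose_eq_transpose_of_trivial]
    rw [Matrix.mul_apply]
    refine Finset.sum_congr rfl fun i _ => ?_
    rw [Matrix.mul_diagonal]
    simp [hwdef, hUdef, RCLike.ofReal_real_eq_id, hμdef,
      Matrix.IsHermitian.eigenvectorUnitary_apply]
    ring
  -- a nonzero eigenvalue exists
  have hex : ∃ i, μ i ≠ 0 := by
    by_contra hall
    push_neg at hall
    apply hBne
    ext k l
    rw [decompB k l]
    simp [hall]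
  obtain ⟨i1, hi1⟩ := hex
  obtain ⟨i0, -, hmax⟩ := Finset.exists_max_image Finset.univ (fun i => |μ i|)
    ⟨i1, Finset.mem_univ i1⟩
  have hμ0 : μ i0 ≠ 0 := by
    intro h0
    have := hmax i1 (Finset.mem_univ i1)
    rw [h0] at this
    simp only [abs_zero] at this
    exact hi1 (abs_eq_zero.mp (le_antisymm this (abs_nonneg _)))
  set t : ℝ := -(μ i0)⁻¹ with htdef
  set c : Fin m → ℝ := fun i => 1 + t * μ i with hcdef
  have hc0 : c i0 = 0 := by
    simp only [hcdef, htdef]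
    field_simp
    norm_num
  have hcnn : ∀ i, 0 ≤ c i := by
    intro i
    have h1 : |μ i * (μ i0)⁻¹| ≤ 1 := by
      rw [abs_mul, abs_inv, ← div_eq_mul_inv, div_le_one (abs_pos.mpr hμ0)]
      exact hmax i (Finset.mem_univ i)
    have h2 : μ i * (μ i0)⁻¹ ≤ 1 := le_trans (le_abs_self _) h1
    have : c i = 1 - μ i * (μ i0)⁻¹ := by simp only [hcdef, htdef]; ring
    rw [this]
    linarith
  have key : ∀ a b, ∑ j, c j * (w j a * w j b)
      = ((1 : Matrix (Fin m) (Fin m) ℝ) + t • B) a b := by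
    intro a b
    have : ∀ j, c j * (w j a * w j b) = w j a * w j b + t * (μ j * (w j a * w j b)) := by
      intro j; simp only [hcdef]; ring
    rw [Finset.sum_congr rfl fun j _ => this j, Finset.sum_add_distrib, ← Finset.mul_sum,
      complete, ← decompB]
    simp [Matrix.add_apply, Matrix.smul_apply]
  refine ⟨t, fun j k => Real.sqrt (c j) * (S *ᵥ w j) k, R *ᵥ w i0, ?_, ?_, ?_⟩
  · -- ξ ≠ 0
    intro h0
    have hw0 : w i0 = 0 := by
      have h1 : S *ᵥ (R *ᵥ w i0) = w i0 := by
        rw [Matrix.mulVec_mulVec, hSR, Matrix.one_mulVec]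
      rw [h0, Matrix.mulVec_zero] at h1
      exact h1.symm
    have := orth i0 i0
    rw [hw0] at this
    simp [Matrix.one_apply] at this
  · -- dot products vanish
    intro j
    have h1 : ∑ k, Real.sqrt (c j) * (S *ᵥ w j) k * (R *ᵥ w i0) k
        = Real.sqrt (c j) * ((S *ᵥ w j) ⬝ᵥ (R *ᵥ w i0)) := by
      rw [dotProduct, Finset.mul_sum]
      exact Finset.sum_congr rfl fun k _ => by ring
    rw [h1]
    have hSRw : S *ᵥ (R *ᵥ w i0) = w i0 := by
      rw [Matrix.mulVec_mulVec, hSR, Matrix.one_mulVec]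
    have h2 : (S *ᵥ w j) ⬝ᵥ (R *ᵥ w i0) = w j ⬝ᵥ w i0 := by
      rw [dotProduct_comm, Matrix.dotProduct_mulVec, ← Matrix.mulVec_transpose, hSt, hSRw,
        dotProduct_comm]
    rw [h2]
    by_cases hj : j = i0
    · subst hj
      rw [show Real.sqrt (c j) = 0 from by rw [hc0, Real.sqrt_zero], zero_mul]
    · have : w j ⬝ᵥ w i0 = 0 := by
        rw [dotProduct, orth j i0, Matrix.one_apply_ne hj]
      rw [this, mul_zero]
  · -- the decomposition identity
    intro k l
    have expand : ∀ j, (Real.sqrt (c j) * (S *ᵥ w j) k) * (Real.sqrt (c j) * (S *ᵥ w j) l)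
        = ∑ a, ∑ b, S k a * S l b * (c j * (w j a * w j b)) := by
      intro j
      have hsq : Real.sqrt (c j) * Real.sqrt (c j) = c j := Real.mul_self_sqrt (hcnn j)
      have h3 : (Real.sqrt (c j) * (S *ᵥ w j) k) * (Real.sqrt (c j) * (S *ᵥ w j) l)
          = c j * ((S *ᵥ w j) k * (S *ᵥ w j) l) := by
        rw [mul_mul_mul_comm, hsq]
      rw [h3]
      show c j * ((∑ a, S k a * w j a) * (∑ b, S l b * w j b)) = _
      rw [Finset.sum_mul_sum, Finset.mul_sum]
      refine Finset.sum_congr rfl fun a _ => ?_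
      rw [Finset.mul_sum]
      exact Finset.sum_congr rfl fun b _ => by ring
    rw [Finset.sum_congr rfl fun j (_ : j ∈ Finset.univ) => expand j]
    rw [Finset.sum_comm]
    have h4 : ∀ a, ∑ j, ∑ b, S k a * S l b * (c j * (w j a * w j b))
        = ∑ b, S k a * S l b * (((1 : Matrix (Fin m) (Fin m) ℝ) + t • B) a b) := by
      intro a
      rw [Finset.sum_comm]
      refine Finset.sum_congr rfl fun b _ => ?_
      rw [← key a b, Finset.mul_sum]
    rw [Finset.sum_congr rfl fun a (_ : a ∈ Finset.univ) => h4 a]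
    -- now identify with (S * (1 + t•B) * S) k l
    have h5 : ∑ a, ∑ b, S k a * S l b * (((1 : Matrix (Fin m) (Fin m) ℝ) + t • B) a b)
        = (S * ((1 : Matrix (Fin m) (Fin m) ℝ) + t • B) * S) k l := by
      rw [Matrix.mul_apply]
      rw [Finset.sum_comm]
      refine Finset.sum_congr rfl fun b _ => ?_
      rw [Matrix.mul_apply, Finset.sum_mul]
      refine Finset.sum_congr rfl fun a _ => ?_
      rw [hSsym b l]
      ring
    rw [h5]
    have h6 : S * ((1 : Matrix (Fin m) (Fin m) ℝ) + t • B) * S = Gp + t • Δ := by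
      rw [Matrix.mul_add, Matrix.add_mul, Matrix.mul_one, hSS]
      congr 1
      rw [Matrix.mul_smul, Matrix.smul_mul, hSBS]
    rw [h6]
    simp only [Matrix.add_apply, Matrix.smul_apply, hΔdef, Matrix.sub_apply, smul_eq_mul]

/-- If a form `f` of degree `2d` has two sum of squares representations
`f = Σ pᵢ² = Σ qᵢ²` by degree-`d` forms which are not orthogonally equivalent but
have the same span `U`, then `f` has a sum of squares representation by forms
spanning a proper subspace of `U`. -/
theorem statement12 (n d r : ℕ) (f : MvPolynomial (Fin n) ℝ)
    (hf : f.IsHomogeneous (2 * d))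
    (p q : Fin r → MvPolynomial (Fin n) ℝ)
    (hp : ∀ i, (p i).IsHomogeneous d) (hq : ∀ i, (q i).IsHomogeneous d)
    (hfp : f = ∑ i, p i ^ 2) (hfq : f = ∑ i, q i ^ 2)
    (hne : ¬ ∃ A : Matrix (Fin r) (Fin r) ℝ, A * A.transpose = 1 ∧
      ∀ i, q i = ∑ j, A i j • p j)
    (hspan : Submodule.span ℝ (Set.range p) = Submodule.span ℝ (Set.range q)) :
    ∃ (s : ℕ) (u : Fin s → MvPolynomial (Fin n) ℝ),
      (∀ j, (u j).IsHomogeneous d) ∧ f = ∑ j, u j ^ 2 ∧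
      Submodule.span ℝ (Set.range u) < Submodule.span ℝ (Set.range p) := by
  classical
  set U : Submodule ℝ (MvPolynomial (Fin n) ℝ) := Submodule.span ℝ (Set.range p) with hUdef
  haveI : FiniteDimensional ℝ U := FiniteDimensional.span_of_finite ℝ (Set.finite_range p)
  set m : ℕ := Module.finrank ℝ U with hmdef
  set b : Module.Basis (Fin m) ℝ U := Module.finBasis ℝ U with hbdef
  set E : (Fin m → ℝ) →ₗ[ℝ] MvPolynomial (Fin n) ℝ :=
    U.subtype ∘ₗ (b.equivFun.symm : (Fin m → ℝ) ≃ₗ[ℝ] U).toLinearMap with hEdef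
  set e : Fin m → MvPolynomial (Fin n) ℝ := fun k => ((b k : U) : MvPolynomial (Fin n) ℝ)
    with hedef
  have hE : ∀ x : Fin m → ℝ, E x = ∑ k, x k • e k := by
    intro x
    show (U.subtype) (b.equivFun.symm x) = _
    rw [Module.Basis.equivFun_symm_apply, map_sum]
    simp [hedef]
  have hEinj : Function.Injective E := by
    intro x y hxy
    exact b.equivFun.symm.injective (Subtype.coe_injective hxy)
  have hErange : LinearMap.range E = U := by
    rw [hEdef, LinearMap.range_comp_of_range_eq_top _ (LinearEquiv.range _),
      Submodule.range_subtype]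
  have hpU : ∀ i, p i ∈ U := fun i => Submodule.subset_span (Set.mem_range_self i)
  have hqU : ∀ i, q i ∈ U := by
    intro i
    show q i ∈ U
    rw [hspan]
    exact Submodule.subset_span (Set.mem_range_self i)
  set C : Matrix (Fin r) (Fin m) ℝ := Matrix.of fun i => b.equivFun ⟨p i, hpU i⟩ with hCdef
  set D : Matrix (Fin r) (Fin m) ℝ := Matrix.of fun i => b.equivFun ⟨q i, hqU i⟩ with hDdef
  have hpE : ∀ i, E (fun k => C i k) = p i := by
    intro i
    show (U.subtype) (b.equivFun.symm (b.equivFun ⟨p i, hpU i⟩)) = p i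
    rw [LinearEquiv.symm_apply_apply]
    rfl
  have hqE : ∀ i, E (fun k => D i k) = q i := by
    intro i
    show (U.subtype) (b.equivFun.symm (b.equivFun ⟨q i, hqU i⟩)) = q i
    rw [LinearEquiv.symm_apply_apply]
    rfl
  have hUhom : ∀ g ∈ U, g.IsHomogeneous d := by
    intro g hg
    have hle : U ≤ homogeneousSubmodule (Fin n) ℝ d := by
      rw [hUdef]
      apply Submodule.span_le.mpr
      rintro _ ⟨i, rfl⟩
      exact (mem_homogeneousSubmodule _ _).mpr (hp i)
    exact (mem_homogeneousSubmodule _ _).mp (hle hg)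
  have hehom : ∀ k, (e k).IsHomogeneous d := fun k => hUhom _ (b k).2
  -- row span of C is everything
  have hrows : Submodule.span ℝ (Set.range (fun i => (C i : Fin m → ℝ))) = ⊤ := by
    apply Submodule.map_injective_of_injective hEinj
    rw [Submodule.map_span, ← Set.range_comp, Submodule.map_top, hErange]
    have : (E ∘ fun i => (C i : Fin m → ℝ)) = p := by
      funext i
      exact hpE i
    rw [this, hUdef]
  -- positive definiteness of the Gram matrix of C
  have hGpPD : (Cᵀ * C).PosDef := by
    refine Matrix.PosDef.of_dotProduct_mulVec_pos ?_ ?_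
    · have h1 := Matrix.isHermitian_conjTranspose_mul_self C
      rwa [Matrix.conjTranspose_eq_transpose_of_trivial] at h1
    · intro x hx
      rw [star_trivial, ← sum_sq_mulVec]
      rcases lt_or_eq_of_le (Finset.sum_nonneg fun i (_ : i ∈ Finset.univ) =>
        sq_nonneg ((C *ᵥ x) i)) with hlt | heq
      · exact hlt
      · exfalso
        have hCx : ∀ i, (C *ᵥ x) i = 0 := by
          intro i
          have := (Finset.sum_eq_zero_iff_of_nonneg
            (fun i (_ : i ∈ Finset.univ) => sq_nonneg ((C *ᵥ x) i))).mp heq.symm i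
            (Finset.mem_univ i)
          exact pow_eq_zero_iff two_ne_zero |>.mp this
        -- x is orthogonal to all rows, which span everything
        have hxmem : x ∈ Submodule.span ℝ (Set.range (fun i => (C i : Fin m → ℝ))) := by
          rw [hrows]; trivial
        obtain ⟨a, ha⟩ := (Submodule.mem_span_range_iff_exists_fun ℝ).mp hxmem
        have h2 : ∀ k, x k = ∑ i, a i * C i k := by
          intro k
          rw [← ha]
          rw [Finset.sum_apply]
          rfl
        have hxx : ∑ k, x k * x k = 0 := by
          calc ∑ k, x k * x k = ∑ k, (∑ i, a i * C i k) * x k := by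
                refine Finset.sum_congr rfl fun k _ => by rw [← h2]
            _ = ∑ k, ∑ i, a i * C i k * x k := by
                refine Finset.sum_congr rfl fun k _ => by rw [Finset.sum_mul]
            _ = ∑ i, ∑ k, a i * C i k * x k := Finset.sum_comm
            _ = ∑ i, a i * ∑ k, C i k * x k := by
                refine Finset.sum_congr rfl fun i _ => ?_
                rw [Finset.mul_sum]
                refine Finset.sum_congr rfl fun k _ => by ring
            _ = 0 := by
                refine Finset.sum_eq_zero fun i _ => ?_
                have h3 : ∑ k, C i k * x k = 0 := hCx i
                rw [h3, mul_zero]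
        have : ∀ k, x k = 0 := by
          intro k
          have := (Finset.sum_eq_zero_iff_of_nonneg
            (fun k (_ : k ∈ Finset.univ) => mul_self_nonneg (x k))).mp hxx k (Finset.mem_univ k)
          exact mul_self_eq_zero.mp this
        exact hx (funext this)
  -- Gram matrices differ (else orthogonal equivalence)
  have hGqt : (Dᵀ * D)ᵀ = Dᵀ * D := by
    rw [Matrix.transpose_mul, Matrix.transpose_transpose]
  have hGne : Cᵀ * C ≠ Dᵀ * D := by
    intro hgram
    obtain ⟨A, hA1, hA2⟩ := gram_eq_orth C D hGpPD hgram
    apply hne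
    refine ⟨A, hA1, fun i => ?_⟩
    have h1 : (fun k => D i k) = fun k => ∑ j, A i j * C j k := by
      funext k
      rw [hA2, Matrix.mul_apply]
    have h2 : (fun k => ∑ j, A i j * C j k) = ∑ j, A i j • (fun k => C j k) := by
      funext k
      rw [Finset.sum_apply]
      rfl
    calc q i = E (fun k => D i k) := (hqE i).symm
      _ = E (∑ j, A i j • (fun k => C j k)) := by rw [h1, h2]
      _ = ∑ j, A i j • p j := by
          rw [map_sum]
          refine Finset.sum_congr rfl fun j _ => ?_
          rw [LinearMap.map_smul, hpE]
  -- the line construction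
  obtain ⟨t, v, ξ, hξ, hdot, hdecomp⟩ := line_singular (Cᵀ * C) (Dᵀ * D) hGpPD hGqt hGne
  -- sum of squares computation
  have sumsq : ∀ {N : ℕ} (wv : Fin N → Fin m → ℝ),
      ∑ i, (E (wv i)) ^ 2 = ∑ k, ∑ l, (∑ i, wv i k * wv i l) • (e k * e l) := by
    intro N wv
    have h1 : ∀ i : Fin N, (E (wv i)) ^ 2
        = ∑ k, ∑ l, (wv i k * wv i l) • (e k * e l) := by
      intro i
      rw [hE, pow_two, Finset.sum_mul_sum]
      refine Finset.sum_congr rfl fun k _ => Finset.sum_congr rfl fun l _ => ?_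
      rw [smul_mul_smul_comm]
    rw [Finset.sum_congr rfl fun i (_ : i ∈ Finset.univ) => h1 i]
    rw [Finset.sum_comm]
    refine Finset.sum_congr rfl fun k _ => ?_
    rw [Finset.sum_comm]
    refine Finset.sum_congr rfl fun l _ => ?_
    rw [← Finset.sum_smul]
  have hfC : f = ∑ k, ∑ l, ((Cᵀ * C) k l) • (e k * e l) := by
    rw [hfp,
      show (∑ i, p i ^ 2) = ∑ i, (E (fun k => C i k)) ^ 2 from
        Finset.sum_congr rfl fun i _ => by rw [hpE],
      sumsq]
    exact Finset.sum_congr rfl fun k _ => Finset.sum_congr rfl fun l _ => by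
      rw [Matrix.mul_apply]; rfl
  have hfD : f = ∑ k, ∑ l, ((Dᵀ * D) k l) • (e k * e l) := by
    rw [hfq,
      show (∑ i, q i ^ 2) = ∑ i, (E (fun k => D i k)) ^ 2 from
        Finset.sum_congr rfl fun i _ => by rw [hqE],
      sumsq]
    exact Finset.sum_congr rfl fun k _ => Finset.sum_congr rfl fun l _ => by
      rw [Matrix.mul_apply]; rfl
  -- the new representation
  refine ⟨m, fun j => E (v j), ?_, ?_, ?_⟩
  · intro j
    apply hUhom
    rw [← hErange]
    exact LinearMap.mem_range_self E (v j)
  · -- sum of squares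
    rw [sumsq]
    have hcoef : ∀ k l, (∑ j, v j k * v j l)
        = (1 - t) * ((Cᵀ * C) k l) + t * ((Dᵀ * D) k l) := by
      intro k l
      rw [← hdecomp k l]
      ring
    rw [show (∑ k, ∑ l, (∑ j, v j k * v j l) • (e k * e l))
        = ∑ k, ∑ l, ((1 - t) * ((Cᵀ * C) k l) + t * ((Dᵀ * D) k l)) • (e k * e l) from
      Finset.sum_congr rfl fun k _ => Finset.sum_congr rfl fun l _ => by rw [hcoef]]
    have hsplit : ∑ k, ∑ l, ((1 - t) * ((Cᵀ * C) k l) + t * ((Dᵀ * D) k l)) • (e k * e l)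
        = (1 - t) • (∑ k, ∑ l, ((Cᵀ * C) k l) • (e k * e l))
          + t • (∑ k, ∑ l, ((Dᵀ * D) k l) • (e k * e l)) := by
      rw [Finset.smul_sum, Finset.smul_sum, ← Finset.sum_add_distrib]
      refine Finset.sum_congr rfl fun k _ => ?_
      rw [Finset.smul_sum, Finset.smul_sum, ← Finset.sum_add_distrib]
      refine Finset.sum_congr rfl fun l _ => ?_
      rw [add_smul, smul_smul, smul_smul]
    rw [hsplit, ← hfC, ← hfD]
    rw [← add_smul]
    rw [show (1 - t) + t = 1 by ring, one_smul]
  · -- proper subspace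
    set ℓ : (Fin m → ℝ) →ₗ[ℝ] ℝ :=
      { toFun := fun x => ∑ k, x k * ξ k
        map_add' := by intro x y; simp [add_mul, Finset.sum_add_distrib]
        map_smul' := by intro c x; simp [Finset.mul_sum, mul_assoc] } with hLdef
    have hvZ : ∀ j, v j ∈ LinearMap.ker ℓ := by
      intro j
      rw [LinearMap.mem_ker]
      exact hdot j
    have hξnotin : ξ ∉ LinearMap.ker ℓ := by
      intro hmem
      rw [LinearMap.mem_ker] at hmem
      have h0 : ∑ k, ξ k * ξ k = 0 := hmem
      have hall : ∀ k, ξ k = 0 := fun k => mul_self_eq_zero.mp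
        ((Finset.sum_eq_zero_iff_of_nonneg
          (fun k (_ : k ∈ Finset.univ) => mul_self_nonneg (ξ k))).mp h0 k (Finset.mem_univ k))
      exact hξ (funext hall)
    have hsub : Submodule.span ℝ (Set.range (fun j => E (v j)))
        ≤ Submodule.map E (LinearMap.ker ℓ) := by
      apply Submodule.span_le.mpr
      rintro _ ⟨j, rfl⟩
      exact Submodule.mem_map_of_mem (hvZ j)
    have hltU : Submodule.map E (LinearMap.ker ℓ) < U := by
      apply lt_of_le_of_ne
      · have h1 : Submodule.map E (LinearMap.ker ℓ) ≤ Submodule.map E ⊤ :=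
          Submodule.map_mono le_top
        rwa [Submodule.map_top, hErange] at h1
      · intro heq
        have h2 : Submodule.map E (LinearMap.ker ℓ) = Submodule.map E ⊤ := by
          rw [Submodule.map_top, hErange, heq]
        have h3 : LinearMap.ker ℓ = ⊤ := Submodule.map_injective_of_injective hEinj h2
        exact hξnotin (h3 ▸ Submodule.mem_top)
    exact lt_of_le_of_lt hsub hltU
end

section
/- Let f ∈ ℝ[x₁,…,xₙ] be a form of degree 2d with rational coefficients, and suppose f = p₁² + ⋯ + p_r² where the forms p₁,…,p_r of degree d are quadratically independent (i.e., the products pᵢpⱼ for 1 ≤ i ≤ j ≤ r are linearly independent) and the subspace span(p₁,…,p_r) of A_d is defined over ℚ (has a basis of polynomials with rational coefficients). Then f is a sum of squares of polynomials with rational coefficients. -/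
open MvPolynomial Matrix

namespace Stmt13

variable {n : ℕ}

/-! ### Generic helper lemmas -/

lemma coords_unique {K M : Type*} [Field K] [AddCommGroup M] [Module K M] {ι : Type*} [Fintype ι]
    {v : ι → M} (hv : LinearIndependent K v) {c d : ι → K}
    (h : ∑ i, c i • v i = ∑ i, d i • v i) : c = d := by
  have := Fintype.linearIndependent_iff.mp hv (c - d) (by
    simp only [Pi.sub_apply, sub_smul, Finset.sum_sub_distrib, h, sub_self])
  funext i
  exact sub_eq_zero.mp (this i)

lemma sum_sym {M : Type*} [AddCommMonoid M] {t : ℕ} (w : Fin t → Fin t → M)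
    (hw : ∀ j k, w j k = w k j) :
    ∑ j, ∑ k, w j k =
      ∑ x : {ij : Fin t × Fin t // ij.1 ≤ ij.2},
        (if x.1.1 = x.1.2 then w x.1.1 x.1.2 else w x.1.1 x.1.2 + w x.1.1 x.1.2) := by
  classical
  have hsub : (∑ x : {ij : Fin t × Fin t // ij.1 ≤ ij.2},
      (if x.1.1 = x.1.2 then w x.1.1 x.1.2 else w x.1.1 x.1.2 + w x.1.1 x.1.2))
      = ∑ p ∈ Finset.univ.filter (fun p : Fin t × Fin t => p.1 ≤ p.2),
        (if p.1 = p.2 then w p.1 p.2 else w p.1 p.2 + w p.1 p.2) := by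
    rw [← Finset.sum_subtype (Finset.univ.filter (fun p : Fin t × Fin t => p.1 ≤ p.2))
      (fun p => by simp)
      (fun p : Fin t × Fin t => if p.1 = p.2 then w p.1 p.2 else w p.1 p.2 + w p.1 p.2)]
  rw [hsub]
  have h1 : ∑ j, ∑ k, w j k = ∑ p ∈ (Finset.univ : Finset (Fin t × Fin t)), w p.1 p.2 := by
    rw [← Finset.univ_product_univ, Finset.sum_product]
  rw [h1, ← Finset.sum_filter_add_sum_filter_not (Finset.univ : Finset (Fin t × Fin t))
    (fun p : Fin t × Fin t => p.1 ≤ p.2)]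
  have h2 : ∑ p ∈ (Finset.univ : Finset (Fin t × Fin t)).filter
      (fun p => ¬ p.1 ≤ p.2), w p.1 p.2
      = ∑ p ∈ (Finset.univ : Finset (Fin t × Fin t)).filter
      (fun p => p.1 < p.2), w p.1 p.2 := by
    refine Finset.sum_nbij' (fun p => Prod.swap p) (fun p => Prod.swap p) ?_ ?_ ?_ ?_ ?_
    · intro p hp; simp only [Finset.mem_filter, Finset.mem_product, Finset.mem_univ, true_and] at *
      exact lt_of_not_ge hp
    · intro p hp; simp only [Finset.mem_filter, Finset.mem_product, Finset.mem_univ, true_and] at *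
      exact not_le_of_gt hp
    · intro p _; exact Prod.swap_swap p
    · intro p _; exact Prod.swap_swap p
    · intro p _; exact hw p.2 p.1 ▸ rfl
  rw [h2]
  have hff : ((Finset.univ : Finset (Fin t × Fin t)).filter
      (fun p => p.1 ≤ p.2)).filter (fun p => ¬ p.1 = p.2)
      = (Finset.univ : Finset (Fin t × Fin t)).filter (fun p => p.1 < p.2) := by
    rw [Finset.filter_filter]
    apply Finset.filter_congr
    intro p _
    simp [lt_iff_le_and_ne]
  rw [← Finset.sum_filter_add_sum_filter_not ((Finset.univ :
      Finset (Fin t × Fin t)).filter (fun p => p.1 ≤ p.2)) (fun p => p.1 = p.2) (fun p => w p.1 p.2),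
    ← Finset.sum_filter_add_sum_filter_not ((Finset.univ :
      Finset (Fin t × Fin t)).filter (fun p => p.1 ≤ p.2)) (fun p => p.1 = p.2)
      (fun p => if p.1 = p.2 then w p.1 p.2 else w p.1 p.2 + w p.1 p.2), hff]
  have e1 : ∑ p ∈ ((Finset.univ : Finset (Fin t × Fin t)).filter
      (fun p => p.1 ≤ p.2)).filter (fun p => p.1 = p.2),
      (if p.1 = p.2 then w p.1 p.2 else w p.1 p.2 + w p.1 p.2)
      = ∑ p ∈ ((Finset.univ : Finset (Fin t × Fin t)).filter
      (fun p => p.1 ≤ p.2)).filter (fun p => p.1 = p.2), w p.1 p.2 := by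
    refine Finset.sum_congr rfl fun p hp => ?_
    rw [if_pos (Finset.mem_filter.mp hp).2]
  have e2 : ∑ p ∈ (Finset.univ : Finset (Fin t × Fin t)).filter
      (fun p => p.1 < p.2),
      (if p.1 = p.2 then w p.1 p.2 else w p.1 p.2 + w p.1 p.2)
      = (∑ p ∈ (Finset.univ : Finset (Fin t × Fin t)).filter
      (fun p => p.1 < p.2), w p.1 p.2)
      + ∑ p ∈ (Finset.univ : Finset (Fin t × Fin t)).filter
      (fun p => p.1 < p.2), w p.1 p.2 := by
    rw [← Finset.sum_add_distrib]
    refine Finset.sum_congr rfl fun p hp => ?_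
    rw [if_neg (ne_of_lt (Finset.mem_filter.mp hp).2)]
  rw [e1, e2]
  abel

/-! ### Quadratic forms on vectors of polynomials -/

noncomputable def qf {K : Type*} [CommSemiring K] {t : ℕ} (H : Matrix (Fin t) (Fin t) K)
    (v : Fin t → MvPolynomial (Fin n) K) : MvPolynomial (Fin n) K :=
  ∑ j, ∑ k, H j k • (v j * v k)

lemma qf_eq_dot {K : Type*} [CommSemiring K] {t : ℕ} (H : Matrix (Fin t) (Fin t) K)
    (v : Fin t → MvPolynomial (Fin n) K) :
    qf H v = v ⬝ᵥ (H.map ⇑(C : K →+* MvPolynomial (Fin n) K)) *ᵥ v := by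
  unfold qf
  simp only [dotProduct, Matrix.mulVec, Matrix.map_apply, Finset.mul_sum]
  refine Finset.sum_congr rfl fun j _ => Finset.sum_congr rfl fun k _ => ?_
  rw [smul_eq_C_mul]; ring

lemma dot_transfer {R : Type*} [CommSemiring R] {a b : Type*} [Fintype a] [Fintype b]
    (X : Matrix a b R) (H : Matrix a a R) (w : b → R) :
    (X *ᵥ w) ⬝ᵥ (H *ᵥ (X *ᵥ w)) = w ⬝ᵥ ((Xᵀ * H * X) *ᵥ w) := by
  have h1 : (Xᵀ * H * X) *ᵥ w = Xᵀ *ᵥ (H *ᵥ (X *ᵥ w)) := by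
    rw [Matrix.mulVec_mulVec, Matrix.mulVec_mulVec, Matrix.mul_assoc]
  conv_rhs => rw [h1, Matrix.dotProduct_mulVec, Matrix.vecMul_transpose]

lemma qf_transfer {K : Type*} [CommSemiring K] {t s : ℕ} (H : Matrix (Fin t) (Fin t) K)
    (X : Matrix (Fin t) (Fin s) K) (v : Fin t → MvPolynomial (Fin n) K)
    (w : Fin s → MvPolynomial (Fin n) K) (h : ∀ i, v i = ∑ l, X i l • w l) :
    qf H v = qf (Xᵀ * H * X) w := by
  have hv : v = (X.map ⇑(C : K →+* MvPolynomial (Fin n) K)) *ᵥ w := by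
    funext i
    simp only [Matrix.mulVec, dotProduct, Matrix.map_apply, h i]
    exact Finset.sum_congr rfl fun l _ => by rw [smul_eq_C_mul]
  rw [qf_eq_dot, qf_eq_dot, hv]
  rw [show ((Xᵀ * H * X).map ⇑(C : K →+* MvPolynomial (Fin n) K))
      = ((X.map ⇑(C : K →+* MvPolynomial (Fin n) K))ᵀ * (H.map ⇑(C : K →+* MvPolynomial (Fin n) K))
        * (X.map ⇑(C : K →+* MvPolynomial (Fin n) K)) : Matrix (Fin s) (Fin s) (MvPolynomial (Fin n) K)) by
    rw [Matrix.map_mul, Matrix.map_mul, Matrix.transpose_map]]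
  exact dot_transfer _ _ _

lemma qf_one {K : Type*} [CommSemiring K] {t : ℕ} (v : Fin t → MvPolynomial (Fin n) K) :
    qf (1 : Matrix (Fin t) (Fin t) K) v = ∑ j, v j ^ 2 := by
  unfold qf
  refine Finset.sum_congr rfl fun j _ => ?_
  rw [Finset.sum_eq_single j]
  · rw [Matrix.one_apply_eq, one_smul, sq]
  · intro k _ hk
    rw [Matrix.one_apply_ne (Ne.symm hk), zero_smul]
  · intro h; exact absurd (Finset.mem_univ j) h

/-! ### Rational sums of squares -/

lemma rat_four_sq (c : ℚ) (hc : 0 ≤ c) : ∃ a b c' d : ℚ, c = a^2 + b^2 + c'^2 + d^2 := by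
  obtain ⟨a, b, c', d, habcd⟩ := Nat.sum_four_squares (c.num.toNat * c.den)
  have hden : (c.den : ℚ) ≠ 0 := by exact_mod_cast c.den_ne_zero
  have hnum : ((c.num.toNat : ℕ) : ℚ) = (c.num : ℚ) := by
    exact_mod_cast congrArg (fun z : ℤ => (z : ℚ)) (Int.toNat_of_nonneg (Rat.num_nonneg.mpr hc))
  have key : c = ((c.num.toNat * c.den : ℕ) : ℚ) / (c.den : ℚ)^2 := by
    rw [Nat.cast_mul, hnum]
    rw [eq_div_iff (pow_ne_zero 2 hden)]
    have hnd : (c.num : ℚ) = c * c.den := by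
      have h := Rat.num_div_den c
      rw [div_eq_iff hden] at h
      exact h
    rw [hnd]
    ring
  refine ⟨a / c.den, b / c.den, c' / c.den, d / c.den, ?_⟩
  rw [div_pow, div_pow, div_pow, div_pow, ← add_div, ← add_div, ← add_div]
  have h2 : ((a:ℚ)^2 + b^2 + c'^2 + d^2) = ((c.num.toNat * c.den : ℕ) : ℚ) := by
    exact_mod_cast congrArg (fun x : ℕ => (x : ℚ)) habcd
  rw [h2]
  exact key

lemma isSumSq_smul_sq (c : ℚ) (hc : 0 ≤ c) (g : MvPolynomial (Fin n) ℚ) :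
    IsSumSq (c • g ^ 2) := by
  obtain ⟨a, b, c', d, rfl⟩ := rat_four_sq c hc
  have : (a^2 + b^2 + c'^2 + d^2) • g^2
      = (a • g) * (a • g) + ((b • g) * (b • g) + ((c' • g) * (c' • g) + ((d • g) * (d • g) + 0))) := by
    simp only [smul_mul_smul_comm, ← sq, add_zero, smul_pow, ← add_smul]
    congr 1
    ring
  rw [this]
  exact .sq_add _ (.sq_add _ (.sq_add _ (.sq_add _ .zero)))

lemma isSumSq_fin (f : MvPolynomial (Fin n) ℚ) (h : IsSumSq f) :
    ∃ (s : ℕ) (u : Fin s → MvPolynomial (Fin n) ℚ), f = ∑ j, u j ^ 2 := by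
  induction h with
  | zero => exact ⟨0, ![], by simp⟩
  | sq_add a _ ih =>
    obtain ⟨s, u, hu⟩ := ih
    exact ⟨s + 1, Fin.cons a u, by simp [Fin.sum_univ_succ, hu, sq]⟩

/-! ### The rational Cholesky-type induction -/

lemma key : ∀ (t : ℕ) (H : Matrix (Fin t) (Fin t) ℚ), (∀ j k, H j k = H k j) →
    (∀ x : Fin t → ℚ, x ≠ 0 → 0 < ∑ j, ∑ k, x j * H j k * x k) →
    ∀ q : Fin t → MvPolynomial (Fin n) ℚ, IsSumSq (qf H q) := by
  intro t
  induction t with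
  | zero => intro H _ _ q; simp [qf]
  | succ t ih =>
    intro H hsym hpd q
    have h00 : 0 < H 0 0 := by
      have := hpd (Pi.single 0 1) (by
        intro h
        have := congrFun h 0
        simp [Pi.single_apply] at this)
      simpa [Pi.single_apply, Finset.sum_ite_eq', ite_mul, mul_ite] using this
    have h00' : H 0 0 ≠ 0 := ne_of_gt h00
    set g : MvPolynomial (Fin n) ℚ := ∑ j, H 0 j • q j with hg
    set H' : Matrix (Fin t) (Fin t) ℚ :=
      fun j k => H j.succ k.succ - H 0 j.succ * H 0 k.succ / H 0 0 with hH'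
    have hsym' : ∀ j k, H' j k = H' k j := by
      intro j k; simp only [hH']; rw [hsym j.succ k.succ]; ring
    have hpd' : ∀ x : Fin t → ℚ, x ≠ 0 → 0 < ∑ j, ∑ k, x j * H' j k * x k := by
      intro x hx
      set S : ℚ := ∑ j, H 0 j.succ * x j with hS
      set c : ℚ := -S / H 0 0 with hc
      set xb : Fin (t+1) → ℚ := Fin.cons c x with hxb
      have hxbne : xb ≠ 0 := by
        intro h
        apply hx
        funext j
        have := congrFun h j.succ
        simpa [hxb] using this
      have hval := hpd xb hxbne
      have hexp : ∑ j, ∑ k, xb j * H j k * xb k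
          = c * H 0 0 * c + c * S + S * c + ∑ j, ∑ k, x j * H j.succ k.succ * x k := by
        rw [Fin.sum_univ_succ]
        have inner0 : ∑ k, xb 0 * H 0 k * xb k
            = c * H 0 0 * c + c * S := by
          rw [Fin.sum_univ_succ]
          simp only [hxb, Fin.cons_zero, Fin.cons_succ]
          congr 1
          rw [hS, Finset.mul_sum]
          exact Finset.sum_congr rfl fun k _ => by ring
        have innerj : ∀ j : Fin t, ∑ k, xb j.succ * H j.succ k * xb k
            = x j * H 0 j.succ * c + ∑ k, x j * H j.succ k.succ * x k := by
          intro j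
          rw [Fin.sum_univ_succ]
          simp only [hxb, Fin.cons_zero, Fin.cons_succ]
          rw [hsym j.succ 0]
        rw [inner0, Finset.sum_congr rfl fun j _ => innerj j, Finset.sum_add_distrib]
        have : ∑ j, x j * H 0 j.succ * c = S * c := by
          rw [hS, Finset.sum_mul]
          exact Finset.sum_congr rfl fun j _ => by ring
        rw [this]
        ring
      have hexp2 : ∑ j, ∑ k, x j * H' j k * x k
          = (∑ j, ∑ k, x j * H j.succ k.succ * x k) - S * S / H 0 0 := by
        simp only [hH']
        have : ∀ j k : Fin t, x j * (H j.succ k.succ - H 0 j.succ * H 0 k.succ / H 0 0) * x k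
            = x j * H j.succ k.succ * x k
              - (H 0 j.succ * x j) * (H 0 k.succ * x k) / H 0 0 := fun j k => by ring
        simp only [this, Finset.sum_sub_distrib]
        congr 1
        rw [hS, Finset.sum_mul_sum]
        rw [Finset.sum_div]
        exact Finset.sum_congr rfl fun j _ => by rw [Finset.sum_div]
      rw [hexp2]
      have hceq : c * H 0 0 * c + c * S + S * c = - (S * S / H 0 0) := by
        rw [hc]; field_simp; ring
      rw [hexp, hceq] at hval
      linarith
    have hdecomp : qf H q = (1 / H 0 0) • g ^ 2 + qf H' (q ∘ Fin.succ) := by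
      have hg2 : (1 / H 0 0) • g ^ 2 = ∑ j, ∑ k, (H 0 j * H 0 k / H 0 0) • (q j * q k) := by
        rw [hg, sq, Finset.sum_mul_sum, Finset.smul_sum]
        refine Finset.sum_congr rfl fun j _ => ?_
        rw [Finset.smul_sum]
        refine Finset.sum_congr rfl fun k _ => ?_
        rw [smul_mul_smul_comm, smul_smul]
        congr 1
        ring
      have hpoint : ∀ j k : Fin (t+1), H j k • (q j * q k)
          = (H 0 j * H 0 k / H 0 0) • (q j * q k)
            + (H j k - H 0 j * H 0 k / H 0 0) • (q j * q k) := by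
        intro j k
        rw [← add_smul]
        congr 1
        ring
      have hrest : ∑ j, ∑ k, (H j k - H 0 j * H 0 k / H 0 0) • (q j * q k)
          = qf H' (q ∘ Fin.succ) := by
        rw [Fin.sum_univ_succ]
        have h0 : ∑ k, (H 0 k - H 0 0 * H 0 k / H 0 0) • (q 0 * q k) = 0 := by
          refine Finset.sum_eq_zero fun k _ => ?_
          rw [show H 0 k - H 0 0 * H 0 k / H 0 0 = 0 from by field_simp; ring, zero_smul]
        rw [h0, zero_add]
        have hj : ∀ j : Fin t, ∑ k, (H j.succ k - H 0 j.succ * H 0 k / H 0 0) • (q j.succ * q k)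
            = ∑ k : Fin t, H' j k • (q j.succ * q k.succ) := by
          intro j
          rw [Fin.sum_univ_succ]
          rw [show H j.succ 0 - H 0 j.succ * H 0 0 / H 0 0 = 0 from by
            rw [hsym j.succ 0]; field_simp; ring, zero_smul, zero_add]
        rw [Finset.sum_congr rfl fun j _ => hj j]
        rfl
      calc qf H q = ∑ j, ∑ k, ((H 0 j * H 0 k / H 0 0) • (q j * q k)
            + (H j k - H 0 j * H 0 k / H 0 0) • (q j * q k)) := by
            unfold qf
            exact Finset.sum_congr rfl fun j _ => Finset.sum_congr rfl fun k _ => hpoint j k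
        _ = (∑ j, ∑ k, (H 0 j * H 0 k / H 0 0) • (q j * q k))
            + ∑ j, ∑ k, (H j k - H 0 j * H 0 k / H 0 0) • (q j * q k) := by
            simp [Finset.sum_add_distrib]
        _ = (1 / H 0 0) • g ^ 2 + qf H' (q ∘ Fin.succ) := by rw [hg2, hrest]
    rw [hdecomp]
    exact (isSumSq_smul_sq _ (by positivity) g).add (ih H' hsym' hpd' (q ∘ Fin.succ))

/-! ### Rational solutions of linear systems with linearly independent columns -/

lemma mulVec_map {a b : Type*} [Fintype b] (M : Matrix a b ℚ) (x : b → ℚ) (i : a) :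
    ((M.map (algebraMap ℚ ℝ)) *ᵥ (fun j => algebraMap ℚ ℝ (x j))) i
      = algebraMap ℚ ℝ ((M *ᵥ x) i) := by
  simp [Matrix.mulVec, dotProduct, Matrix.map_apply]

lemma ratsolve {ι : Type*} [Fintype ι] [DecidableEq ι] (v : ι → MvPolynomial (Fin n) ℚ)
    (hv : LinearIndependent ℝ fun i => map (algebraMap ℚ ℝ) (v i))
    (f : MvPolynomial (Fin n) ℚ) (c : ι → ℝ)
    (hc : ∑ i, c i • map (algebraMap ℚ ℝ) (v i) = map (algebraMap ℚ ℝ) f) :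
    ∃ c' : ι → ℚ, (∀ i, algebraMap ℚ ℝ (c' i) = c i) ∧ ∑ i, c' i • v i = f := by
  classical
  set φ := algebraMap ℚ ℝ with hφ
  set S : Finset ((Fin n) →₀ ℕ) := Finset.univ.biUnion (fun i : ι => (v i).support) with hSdef
  set M : Matrix {m // m ∈ S} ι ℚ := fun m i => coeff m.1 (v i) with hM
  set N : Matrix ι ι ℚ := Mᵀ * M with hN
  have hcm : ∀ m : (Fin n) →₀ ℕ, ∑ i, c i * φ (coeff m (v i)) = φ (coeff m f) := by
    intro m
    have := congrArg (coeff m) hc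
    rw [coeff_sum] at this
    simp only [coeff_smul, coeff_map, smul_eq_mul] at this
    exact this
  have hinj : ∀ x : ι → ℚ, M *ᵥ x = 0 → x = 0 := by
    intro x hx
    have hzero : ∑ i, x i • v i = 0 := by
      apply MvPolynomial.ext
      intro m
      rw [coeff_sum]
      simp only [coeff_smul, smul_eq_mul, coeff_zero]
      by_cases hm : m ∈ S
      · have := congrFun hx ⟨m, hm⟩
        simpa [Matrix.mulVec, dotProduct, hM, mul_comm] using this
      · refine Finset.sum_eq_zero fun i _ => ?_
        have : coeff m (v i) = 0 := by
          by_contra hne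
          exact hm (Finset.mem_biUnion.mpr ⟨i, Finset.mem_univ i, by
            simpa [MvPolynomial.mem_support_iff] using hne⟩)
        rw [this, mul_zero]
    have hzero' : ∑ i, φ (x i) • map φ (v i) = 0 := by
      have h2 := congrArg (map φ) hzero
      rw [map_sum (map φ), map_zero] at h2
      rw [← h2]
      exact Finset.sum_congr rfl fun i _ => by
        simp only [smul_eq_C_mul, _root_.map_mul, map_C]
    have := Fintype.linearIndependent_iff.mp hv (fun i => φ (x i)) hzero'
    funext i
    have hxi := this i
    exact (map_eq_zero_iff φ φ.injective).mp hxi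
  have hdet : N.det ≠ 0 := by
    intro h0
    obtain ⟨x, hxne, hx⟩ := Matrix.exists_mulVec_eq_zero_iff.mpr h0
    apply hxne
    apply hinj
    have h1 : x ⬝ᵥ (N *ᵥ x) = (M *ᵥ x) ⬝ᵥ (M *ᵥ x) := by
      rw [hN, ← Matrix.mulVec_mulVec, Matrix.dotProduct_mulVec, Matrix.vecMul_transpose]
    rw [hx, dotProduct_zero] at h1
    exact dotProduct_self_eq_zero.mp h1.symm
  have hdetR : ((N.map φ).det) ≠ 0 := by
    rw [show N.map ⇑φ = φ.mapMatrix N from rfl, ← RingHom.map_det]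
    exact fun h => hdet (φ.injective (h.trans (map_zero φ).symm))
  set y : {m // m ∈ S} → ℚ := fun m => coeff m.1 f with hy
  set c' : ι → ℚ := N⁻¹ *ᵥ (Mᵀ *ᵥ y) with hc'
  have hNc' : N *ᵥ c' = Mᵀ *ᵥ y := by
    rw [hc', Matrix.mulVec_mulVec, Matrix.mul_nonsing_inv N (isUnit_iff_ne_zero.mpr hdet),
      Matrix.one_mulVec]
  have hMc : (M.map φ) *ᵥ c = fun m => φ (y m) := by
    funext m
    simp only [Matrix.mulVec, dotProduct, Matrix.map_apply, hM, hy]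
    rw [← hcm m.1]
    exact Finset.sum_congr rfl fun i _ => mul_comm _ _
  have hNrc : (N.map φ) *ᵥ c = (N.map φ) *ᵥ (fun i => φ (c' i)) := by
    have h1 : N.map ⇑φ = (M.map φ)ᵀ * (M.map φ) := by
      rw [hN, Matrix.map_mul, Matrix.transpose_map]
    have h2 : (N.map φ) *ᵥ c = fun i => φ ((Mᵀ *ᵥ y) i) := by
      rw [h1, ← Matrix.mulVec_mulVec, hMc]
      funext i
      exact mulVec_map Mᵀ y i
    have h3 : (N.map φ) *ᵥ (fun i => φ (c' i)) = fun i => φ ((N *ᵥ c') i) := by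
      funext i
      exact mulVec_map N c' i
    rw [h2, h3, hNc']
  have hinv : (N.map φ)⁻¹ * (N.map φ) = 1 :=
    Matrix.nonsing_inv_mul _ (isUnit_iff_ne_zero.mpr hdetR)
  have h5 : c = fun i => φ (c' i) := by
    have h6 := congrArg (fun z => (N.map φ)⁻¹ *ᵥ z) hNrc
    simpa [Matrix.mulVec_mulVec, hinv, Matrix.one_mulVec] using h6
  have hcc : ∀ i, φ (c' i) = c i := fun i => (congrFun h5 i).symm
  refine ⟨c', hcc, ?_⟩
  apply MvPolynomial.map_injective φ φ.injective
  rw [map_sum (map φ), ← hc]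
  exact Finset.sum_congr rfl fun i _ => by
    simp only [smul_eq_C_mul, _root_.map_mul, map_C, hcc i]

end Stmt13
open Stmt13 in
/-- If a form `f` with rational coefficients is a sum of squares `f = Σ pᵢ²` of
quadratically independent degree-`d` real forms whose span is defined over `ℚ`,
then `f` is a sum of squares of polynomials with rational coefficients. -/
theorem statement13 (n d r : ℕ) (f : MvPolynomial (Fin n) ℚ)
    (hf : f.IsHomogeneous (2 * d))
    (p : Fin r → MvPolynomial (Fin n) ℝ)
    (hp : ∀ i, (p i).IsHomogeneous d)
    (hfp : map (algebraMap ℚ ℝ) f = ∑ i, p i ^ 2)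
    (hquadindep : LinearIndependent ℝ
      (fun ij : {ij : Fin r × Fin r // ij.1 ≤ ij.2} =>
        p (ij : Fin r × Fin r).1 * p (ij : Fin r × Fin r).2))
    (hratspan : ∃ (s : ℕ) (b : Fin s → MvPolynomial (Fin n) ℚ),
      Submodule.span ℝ (Set.range fun i => map (algebraMap ℚ ℝ) (b i)) =
        Submodule.span ℝ (Set.range p)) :
    ∃ (s : ℕ) (u : Fin s → MvPolynomial (Fin n) ℚ), f = ∑ j, u j ^ 2 := by
  classical
  set φ := algebraMap ℚ ℝ with hφ
  -- Step 1: the pᵢ are linearly independent over ℝ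
  have hpli : LinearIndependent ℝ p := by
    rw [Fintype.linearIndependent_iff]
    intro g hg i₀
    have hmul : ∑ i, g i • (p i * p i₀) = 0 := by
      have h := congrArg (· * p i₀) hg
      simpa [Finset.sum_mul, smul_mul_assoc] using h
    have hinj : Function.Injective (fun i : Fin r =>
        (⟨(min i i₀, max i i₀), min_le_max⟩ : {ij : Fin r × Fin r // ij.1 ≤ ij.2})) := by
      intro a b hab
      simp only [Subtype.mk.injEq, Prod.mk.injEq] at hab
      obtain ⟨h1, h2⟩ := hab
      rcases le_total a i₀ with ha | ha <;> rcases le_total b i₀ with hb | hb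
      · rw [min_eq_left ha, min_eq_left hb] at h1; exact h1
      · rw [min_eq_left ha, min_eq_right hb] at h1
        rw [max_eq_right ha, max_eq_left hb] at h2
        exact h1.trans h2
      · rw [min_eq_right ha, min_eq_left hb] at h1
        rw [max_eq_left ha, max_eq_right hb] at h2
        exact h2.trans h1
      · rw [max_eq_left ha, max_eq_left hb] at h2; exact h2
    have hli2 : LinearIndependent ℝ ((fun ij : {ij : Fin r × Fin r // ij.1 ≤ ij.2} =>
        p (ij : Fin r × Fin r).1 * p (ij : Fin r × Fin r).2) ∘
        (fun i : Fin r => (⟨(min i i₀, max i i₀), min_le_max⟩ :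
          {ij : Fin r × Fin r // ij.1 ≤ ij.2}))) :=
      hquadindep.comp _ hinj
    have hfun : ((fun ij : {ij : Fin r × Fin r // ij.1 ≤ ij.2} =>
        p (ij : Fin r × Fin r).1 * p (ij : Fin r × Fin r).2) ∘
        (fun i : Fin r => (⟨(min i i₀, max i i₀), min_le_max⟩ :
          {ij : Fin r × Fin r // ij.1 ≤ ij.2}))) = fun i => p i * p i₀ := by
      funext i
      simp only [Function.comp_apply]
      rcases le_total i i₀ with h | h
      · rw [min_eq_left h, max_eq_right h]
      · rw [min_eq_right h, max_eq_left h, mul_comm]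
    rw [hfun] at hli2
    exact Fintype.linearIndependent_iff.mp hli2 g hmul i₀
  -- Step 2: a rational basis of the span
  obtain ⟨s, b, hbspan⟩ := hratspan
  obtain ⟨B, hBsub, hBspan, hBli⟩ :=
    exists_linearIndependent ℝ (Set.range fun i => map φ (b i))
  have hBfin : B.Finite := (Set.finite_range _).subset hBsub
  haveI : Fintype B := hBfin.fintype
  set t := Fintype.card B with ht
  set e : Fin t ≃ B := (Fintype.equivFin B).symm with he
  have hpre : ∀ x : B, ∃ i : Fin s, map φ (b i) = (x : MvPolynomial (Fin n) ℝ) :=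
    fun x => hBsub x.2
  choose i0 hi0 using hpre
  set q : Fin t → MvPolynomial (Fin n) ℚ := fun i => b (i0 (e i)) with hq
  set Q : Fin t → MvPolynomial (Fin n) ℝ := fun i => map φ (q i) with hQ
  have hQe : Q = fun i => ((e i : MvPolynomial (Fin n) ℝ)) := funext fun i => hi0 (e i)
  have hQli : LinearIndependent ℝ Q := by
    rw [hQe]; exact hBli.comp e e.injective
  have hQspan : Submodule.span ℝ (Set.range Q) = Submodule.span ℝ (Set.range p) := by
    rw [hQe]
    have hrange : Set.range (fun i : Fin t => ((e i : MvPolynomial (Fin n) ℝ))) = B := by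
      have : (fun i : Fin t => ((e i : MvPolynomial (Fin n) ℝ)))
          = Subtype.val ∘ e := rfl
      rw [this, Set.range_comp, e.surjective.range_eq, Set.image_univ, Subtype.range_coe]
    rw [hrange, hBspan, hbspan]
  -- Step 3: coordinate matrices
  have hmemA : ∀ i, ∃ cA : Fin t → ℝ, ∑ j, cA j • Q j = p i := by
    intro i
    rw [← Submodule.mem_span_range_iff_exists_fun]
    rw [hQspan]
    exact Submodule.subset_span (Set.mem_range_self i)
  choose Af hA using hmemA
  have hmemB : ∀ j, ∃ cB : Fin r → ℝ, ∑ k, cB k • p k = Q j := by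
    intro j
    rw [← Submodule.mem_span_range_iff_exists_fun]
    rw [← hQspan]
    exact Submodule.subset_span (Set.mem_range_self j)
  choose Bf hB using hmemB
  set A : Matrix (Fin r) (Fin t) ℝ := Matrix.of Af with hAdef
  set BM : Matrix (Fin t) (Fin r) ℝ := Matrix.of Bf with hBMdef
  have hBA : BM * A = 1 := by
    apply Matrix.ext; intro j l
    rw [Matrix.mul_apply]
    have hid : ∑ l, (1 : Matrix (Fin t) (Fin t) ℝ) j l • Q l = Q j := by
      simp [Matrix.one_apply, ite_smul]
    have hcoords : ∑ l, (∑ k, BM j k * A k l) • Q l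
        = ∑ l, (1 : Matrix (Fin t) (Fin t) ℝ) j l • Q l := by
      calc ∑ l, (∑ k, BM j k * A k l) • Q l
          = ∑ l, ∑ k, (BM j k * A k l) • Q l := by
            refine Finset.sum_congr rfl fun l _ => ?_; rw [Finset.sum_smul]
        _ = ∑ k, ∑ l, (BM j k * A k l) • Q l := Finset.sum_comm
        _ = ∑ k, BM j k • (∑ l, A k l • Q l) := by
            refine Finset.sum_congr rfl fun k _ => ?_
            rw [Finset.smul_sum]
            exact Finset.sum_congr rfl fun l _ => (smul_smul _ _ _).symm
        _ = ∑ k, BM j k • p k := by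
            refine Finset.sum_congr rfl fun k _ => ?_
            exact congrArg (fun z => BM j k • z) (hA k)
        _ = Q j := hB j
        _ = ∑ l, (1 : Matrix (Fin t) (Fin t) ℝ) j l • Q l := hid.symm
    exact congrFun (coords_unique hQli hcoords) l
  -- Step 4: the real Gram matrix
  set G : Matrix (Fin t) (Fin t) ℝ := Aᵀ * A with hG
  have hGsym : ∀ j k, G j k = G k j := by
    intro j k
    rw [hG, Matrix.mul_apply, Matrix.mul_apply]
    exact Finset.sum_congr rfl fun i _ => by
      rw [Matrix.transpose_apply, Matrix.transpose_apply]; ring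
  have hfq : map φ f = qf G Q := by
    rw [hfp, ← qf_one p, qf_transfer (1 : Matrix (Fin r) (Fin r) ℝ) A p Q
      (fun i => (hA i).symm), Matrix.mul_one]
  have hGpd : ∀ x : Fin t → ℝ, x ≠ 0 → 0 < ∑ j, ∑ k, x j * G j k * x k := by
    intro x hx
    have hdot : ∑ j, ∑ k, x j * G j k * x k = (A *ᵥ x) ⬝ᵥ (A *ᵥ x) := by
      rw [show ∑ j, ∑ k, x j * G j k * x k = x ⬝ᵥ (G *ᵥ x) by
        simp [dotProduct, Matrix.mulVec, Finset.mul_sum, mul_assoc]]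
      rw [hG, ← Matrix.mulVec_mulVec, Matrix.dotProduct_mulVec, Matrix.vecMul_transpose]
    have hAx : A *ᵥ x ≠ 0 := by
      intro h0
      apply hx
      have h1 : (BM * A) *ᵥ x = BM *ᵥ (A *ᵥ x) := (Matrix.mulVec_mulVec x BM A).symm
      rw [hBA, Matrix.one_mulVec, h0, Matrix.mulVec_zero] at h1
      exact h1
    rw [hdot]
    have hge : 0 ≤ (A *ᵥ x) ⬝ᵥ (A *ᵥ x) :=
      Finset.sum_nonneg fun i _ => mul_self_nonneg _
    rcases hge.lt_or_eq with h | h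
    · exact h
    · exact absurd (dotProduct_self_eq_zero.mp h.symm) hAx
  -- Step 5: products of the Q's are linearly independent
  have hQQli : LinearIndependent ℝ (fun x : {ij : Fin t × Fin t // ij.1 ≤ ij.2} =>
      Q x.1.1 * Q x.1.2) := by
    rw [Fintype.linearIndependent_iff]
    intro g hg
    set E : Matrix (Fin t) (Fin t) ℝ := fun j k =>
      if h : j ≤ k then (if j = k then g ⟨(j,k), h⟩ else g ⟨(j,k), h⟩ / 2)
      else g ⟨(k,j), (not_le.mp h).le⟩ / 2 with hE
    have hEv1 : ∀ (j k : Fin t) (h : j ≤ k),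
        E j k = if j = k then g ⟨(j,k), h⟩ else g ⟨(j,k), h⟩ / 2 := by
      intro j k h
      rw [hE]
      exact dif_pos h
    have hEv2 : ∀ (j k : Fin t) (h : ¬ j ≤ k),
        E j k = g ⟨(k,j), (not_le.mp h).le⟩ / 2 := by
      intro j k h
      rw [hE]
      exact dif_neg h
    have hEsym : ∀ j k, E j k = E k j := by
      intro j k
      rcases lt_trichotomy j k with h | h | h
      · rw [hEv1 j k h.le, if_neg h.ne, hEv2 k j (not_le.mpr h)]
      · subst h; rfl
      · rw [hEv2 j k (not_le.mpr h), hEv1 k j h.le, if_neg h.ne]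
    have hss := sum_sym (fun j k => E j k • (Q j * Q k))
      (fun j k => by rw [hEsym j k, mul_comm])
    have hqfE : qf E Q = 0 := by
      unfold qf
      rw [hss, ← hg]
      refine Finset.sum_congr rfl fun x _ => ?_
      obtain ⟨⟨j, k⟩, hx⟩ := x
      show (if j = k then E j k • (Q j * Q k) else E j k • (Q j * Q k) + E j k • (Q j * Q k))
          = g ⟨(j,k), hx⟩ • (Q j * Q k)
      rw [hEv1 j k hx]
      by_cases hjk : j = k
      · rw [if_pos hjk, if_pos hjk]
      · rw [if_neg hjk, if_neg hjk, ← add_smul]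
        congr 1
        ring
    have hqfD : qf (BMᵀ * E * BM) p = 0 := by
      rw [← qf_transfer E BM Q p (fun j => (hB j).symm)]
      exact hqfE
    set D := BMᵀ * E * BM with hD
    have hDsym : ∀ l m, D l m = D m l := by
      have hEt : Eᵀ = E := Matrix.ext fun j k => hEsym k j
      have hDt : Dᵀ = D := by
        rw [hD, Matrix.transpose_mul, Matrix.transpose_mul, Matrix.transpose_transpose, hEt,
          Matrix.mul_assoc]
      intro l m
      have := congrFun (congrFun hDt m) l
      rw [Matrix.transpose_apply] at this
      exact this
    have hDkey : ∀ l m, l ≤ m → D l m = 0 := by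
      have hssD := sum_sym (fun l m => D l m • (p l * p m))
        (fun l m => by rw [hDsym l m, mul_comm])
      unfold qf at hqfD
      rw [hssD] at hqfD
      have h1 := hqfD
      have h2 : ∑ x : {ij : Fin r × Fin r // ij.1 ≤ ij.2},
          (if x.1.1 = x.1.2 then D x.1.1 x.1.2 else D x.1.1 x.1.2 + D x.1.1 x.1.2)
            • (p x.1.1 * p x.1.2) = 0 := by
        rw [← h1]
        refine Finset.sum_congr rfl fun x _ => ?_
        by_cases hd : x.1.1 = x.1.2
        · rw [if_pos hd, if_pos hd]
        · rw [if_neg hd, if_neg hd, add_smul]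
      have h3 := Fintype.linearIndependent_iff.mp hquadindep _ h2
      intro l m hlm
      have h4 := h3 ⟨(l, m), hlm⟩
      simp only at h4
      by_cases hd : l = m
      · rwa [if_pos hd] at h4
      · rw [if_neg hd] at h4
        exact add_self_eq_zero.mp h4
    have hD0 : D = 0 := by
      apply Matrix.ext; intro l m
      rw [Matrix.zero_apply]
      rcases le_total l m with h | h
      · exact hDkey l m h
      · rw [hDsym l m]; exact hDkey m l h
    have hE0 : E = 0 := by
      have h4 : Aᵀ * D * A = E := by
        rw [hD]
        have : Aᵀ * (BMᵀ * E * BM) * A = (BM * A)ᵀ * E * (BM * A) := by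
          rw [Matrix.transpose_mul]
          simp only [Matrix.mul_assoc]
        rw [this, hBA, Matrix.transpose_one, Matrix.one_mul, Matrix.mul_one]
      rw [← h4, hD0, Matrix.mul_zero, Matrix.zero_mul]
    intro x
    obtain ⟨⟨j, k⟩, hx⟩ := x
    have h5 := congrFun (congrFun hE0 j) k
    rw [Matrix.zero_apply, hEv1 j k hx] at h5
    by_cases hjk : j = k
    · rwa [if_pos hjk] at h5
    · rw [if_neg hjk] at h5
      have h6 := congrArg (· * 2) h5
      simpa using h6
  -- Step 6: rational Gram matrix via ratsolve
  set cR : {ij : Fin t × Fin t // ij.1 ≤ ij.2} → ℝ := fun x =>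
    if x.1.1 = x.1.2 then G x.1.1 x.1.2 else 2 * G x.1.1 x.1.2 with hcR
  have hfc : ∑ x : {ij : Fin t × Fin t // ij.1 ≤ ij.2}, cR x • (Q x.1.1 * Q x.1.2)
      = map φ f := by
    rw [hfq]
    unfold qf
    have hssG := sum_sym (fun j k => G j k • (Q j * Q k))
      (fun j k => by rw [hGsym j k, mul_comm])
    rw [hssG]
    refine (Finset.sum_congr rfl fun x _ => ?_).symm
    simp only [hcR]
    by_cases hd : x.1.1 = x.1.2
    · rw [if_pos hd, if_pos hd]
    · rw [if_neg hd, if_neg hd, two_mul, add_smul]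
  have hmapmul : (fun x : {ij : Fin t × Fin t // ij.1 ≤ ij.2} =>
      map φ (q x.1.1 * q x.1.2)) = fun x => Q x.1.1 * Q x.1.2 := by
    funext x
    rw [_root_.map_mul]
  have hQQli' : LinearIndependent ℝ (fun x : {ij : Fin t × Fin t // ij.1 ≤ ij.2} =>
      map φ (q x.1.1 * q x.1.2)) := by
    rw [hmapmul]; exact hQQli
  have hfc' : ∑ x : {ij : Fin t × Fin t // ij.1 ≤ ij.2}, cR x • map φ (q x.1.1 * q x.1.2)
      = map φ f := by
    rw [← hfc]
    refine Finset.sum_congr rfl fun x _ => ?_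
    rw [_root_.map_mul]
  obtain ⟨c', hc'cast, hc'sum⟩ := ratsolve
    (fun x : {ij : Fin t × Fin t // ij.1 ≤ ij.2} => q x.1.1 * q x.1.2)
    hQQli' f cR hfc'
  set G' : Matrix (Fin t) (Fin t) ℚ := fun j k =>
    if h : j ≤ k then (if j = k then c' ⟨(j,k), h⟩ else c' ⟨(j,k), h⟩ / 2)
    else c' ⟨(k,j), (not_le.mp h).le⟩ / 2 with hG'
  have hGv1 : ∀ (j k : Fin t) (h : j ≤ k),
      G' j k = if j = k then c' ⟨(j,k), h⟩ else c' ⟨(j,k), h⟩ / 2 := by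
    intro j k h
    rw [hG']
    exact dif_pos h
  have hGv2 : ∀ (j k : Fin t) (h : ¬ j ≤ k),
      G' j k = c' ⟨(k,j), (not_le.mp h).le⟩ / 2 := by
    intro j k h
    rw [hG']
    exact dif_neg h
  have hG'sym : ∀ j k, G' j k = G' k j := by
    intro j k
    rcases lt_trichotomy j k with h | h | h
    · rw [hGv1 j k h.le, if_neg h.ne, hGv2 k j (not_le.mpr h)]
    · subst h; rfl
    · rw [hGv2 j k (not_le.mpr h), hGv1 k j h.le, if_neg h.ne]
  have hG'cast : ∀ j k, φ (G' j k) = G j k := by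
    intro j k
    rcases lt_trichotomy j k with h | h | h
    · rw [hGv1 j k h.le, if_neg h.ne, map_div₀, hc'cast ⟨(j,k), h.le⟩]
      simp only [hcR, if_neg h.ne]
      rw [_root_.map_ofNat]
      exact mul_div_cancel_left₀ _ two_ne_zero
    · subst h
      rw [hGv1 j j le_rfl, if_pos rfl, hc'cast ⟨(j,j), le_rfl⟩]
      simp only [hcR, if_pos rfl]
    · rw [hGv2 j k (not_le.mpr h), map_div₀, hc'cast ⟨(k,j), h.le⟩]
      simp only [hcR, if_neg h.ne]
      rw [_root_.map_ofNat, hGsym j k]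
      exact mul_div_cancel_left₀ _ two_ne_zero
  have hG'pd : ∀ x : Fin t → ℚ, x ≠ 0 → 0 < ∑ j, ∑ k, x j * G' j k * x k := by
    intro x hx
    have hxr : (fun j => φ (x j)) ≠ 0 := by
      intro h0
      apply hx
      funext j
      have := congrFun h0 j
      exact φ.injective (by simpa using this)
    have h1 := hGpd _ hxr
    have h2 : φ (∑ j, ∑ k, x j * G' j k * x k) = ∑ j, ∑ k, φ (x j) * G j k * φ (x k) := by
      rw [map_sum φ]
      refine Finset.sum_congr rfl fun j _ => ?_
      rw [map_sum φ]
      refine Finset.sum_congr rfl fun k _ => ?_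
      rw [_root_.map_mul, _root_.map_mul, hG'cast]
    rw [← h2, hφ, eq_ratCast] at h1
    exact_mod_cast h1
  have hf' : f = qf G' q := by
    rw [← hc'sum]
    unfold qf
    have hssG' := sum_sym (fun j k => G' j k • (q j * q k))
      (fun j k => by rw [hG'sym j k, mul_comm])
    rw [hssG']
    refine Finset.sum_congr rfl fun x _ => ?_
    obtain ⟨⟨j, k⟩, hx⟩ := x
    show c' ⟨(j,k), hx⟩ • (q j * q k)
        = (if j = k then G' j k • (q j * q k) else G' j k • (q j * q k) + G' j k • (q j * q k))
    rw [hGv1 j k hx]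
    by_cases hjk : j = k
    · rw [if_pos hjk, if_pos hjk]
    · rw [if_neg hjk, if_neg hjk, ← add_smul]
      congr 1
      ring
  rw [hf']
  exact isSumSq_fin _ (key t G' hG'sym hG'pd q)
end

section
/- Let ξ₁,…,ξ₉ ∈ ℝ³ be the nine points ξ₁=(1,1,1), ξ₂=(−1,1,1), ξ₃=(1,−1,1), ξ₄=(1,1,−1), ξ₅=(0,1,1), ξ₆=(0,1,−1), ξ₇=(1,0,1), ξ₈=(1,0,−1), ξ₉=(0,0,1). Then for every cubic form p ∈ ℝ[x₁,x₂,x₃] one has p(ξ₁)² + p(ξ₂)² + p(ξ₃)² + p(ξ₄)² + 4p(ξ₅)² + 4p(ξ₆)² + 4p(ξ₇)² + 4p(ξ₈)² ≥ 2p(ξ₉)², with equality if and only if p lies in the 3-dimensional subspace of A₃ spanned by p₁ = x₁(x₁² − x₃²), p₂ = x₂(x₂² − x₃²) and p₃ = (3x₁² + 3x₂² − 4x₃²)x₃. -/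
open MvPolynomial

/-- The nine intersection points of the cubics `x₁(x₁²−x₃²)` and `x₂(x₂²−x₃²)`. -/
noncomputable def xi : Fin 9 → (Fin 3 → ℝ) :=
  ![![1, 1, 1], ![-1, 1, 1], ![1, -1, 1], ![1, 1, -1],
    ![0, 1, 1], ![0, 1, -1], ![1, 0, 1], ![1, 0, -1], ![0, 0, 1]]

noncomputable def dd (a b c : ℕ) : Fin 3 →₀ ℕ :=
  Finsupp.single 0 a + Finsupp.single 1 b + Finsupp.single 2 c

lemma dd_apply0 (a b c : ℕ) : dd a b c 0 = a := by simp [dd, Finsupp.single_apply]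
lemma dd_apply1 (a b c : ℕ) : dd a b c 1 = b := by simp [dd, Finsupp.single_apply]
lemma dd_apply2 (a b c : ℕ) : dd a b c 2 = c := by simp [dd, Finsupp.single_apply]

lemma eq_dd (m : Fin 3 →₀ ℕ) : m = dd (m 0) (m 1) (m 2) := by
  ext i
  fin_cases i <;> simp [dd, Finsupp.single_apply]

lemma degree_dd (m : Fin 3 →₀ ℕ) : m.degree = m 0 + m 1 + m 2 := by
  rw [Finsupp.degree_apply, Finset.sum_subset (Finset.subset_univ m.support)]
  · simp [Fin.sum_univ_three]
  · intro x _ hx; simpa using hx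

lemma eq_dd_iff (m : Fin 3 →₀ ℕ) (a b c : ℕ) :
    m = dd a b c ↔ m 0 = a ∧ m 1 = b ∧ m 2 = c := by
  constructor
  · rintro rfl; simp [dd_apply0, dd_apply1, dd_apply2]
  · rintro ⟨h0, h1, h2⟩; rw [eq_dd m, h0, h1, h2]

set_option maxHeartbeats 2000000 in
lemma key3 : ∀ a b c : ℕ, a + b + c = 3 →
    (a = 3 ∧ b = 0 ∧ c = 0) ∨ (a = 0 ∧ b = 3 ∧ c = 0) ∨ (a = 0 ∧ b = 0 ∧ c = 3) ∨
    (a = 2 ∧ b = 1 ∧ c = 0) ∨ (a = 2 ∧ b = 0 ∧ c = 1) ∨ (a = 1 ∧ b = 2 ∧ c = 0) ∨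
    (a = 0 ∧ b = 2 ∧ c = 1) ∨ (a = 1 ∧ b = 0 ∧ c = 2) ∨ (a = 0 ∧ b = 1 ∧ c = 2) ∨
    (a = 1 ∧ b = 1 ∧ c = 1) := by
  intro a b c h
  have ha : a ≤ 3 := by omega
  have hb : b ≤ 3 := by omega
  have hc : c ≤ 3 := by omega
  interval_cases a <;> interval_cases b <;> interval_cases c <;> simp_all

lemma enum3 (m : Fin 3 →₀ ℕ) (h : m.degree = 3) :
    m = dd 3 0 0 ∨ m = dd 0 3 0 ∨ m = dd 0 0 3 ∨ m = dd 2 1 0 ∨ m = dd 2 0 1 ∨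
    m = dd 1 2 0 ∨ m = dd 0 2 1 ∨ m = dd 1 0 2 ∨ m = dd 0 1 2 ∨ m = dd 1 1 1 := by
  have h3 : m 0 + m 1 + m 2 = 3 := by rwa [degree_dd] at h
  simp only [eq_dd_iff]
  exact key3 _ _ _ h3

lemma mon_eq (a b c : ℕ) (r : ℝ) :
    (monomial (dd a b c) r : MvPolynomial (Fin 3) ℝ) = C r * X 0 ^ a * X 1 ^ b * X 2 ^ c := by
  rw [X_pow_eq_monomial, X_pow_eq_monomial, X_pow_eq_monomial, C_apply,
    monomial_mul, monomial_mul, monomial_mul, dd]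
  simp

set_option maxHeartbeats 1000000 in
lemma rep3 (p : MvPolynomial (Fin 3) ℝ) (hp : p.IsHomogeneous 3) :
    p = monomial (dd 3 0 0) (coeff (dd 3 0 0) p) + monomial (dd 0 3 0) (coeff (dd 0 3 0) p) +
      monomial (dd 0 0 3) (coeff (dd 0 0 3) p) + monomial (dd 2 1 0) (coeff (dd 2 1 0) p) +
      monomial (dd 2 0 1) (coeff (dd 2 0 1) p) + monomial (dd 1 2 0) (coeff (dd 1 2 0) p) +
      monomial (dd 0 2 1) (coeff (dd 0 2 1) p) + monomial (dd 1 0 2) (coeff (dd 1 0 2) p) +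
      monomial (dd 0 1 2) (coeff (dd 0 1 2) p) + monomial (dd 1 1 1) (coeff (dd 1 1 1) p) := by
  ext m
  by_cases hd : m.degree = 3
  · rcases enum3 m hd with h | h | h | h | h | h | h | h | h | h <;> subst h <;>
      simp [coeff_monomial, eq_dd_iff, dd_apply0, dd_apply1, dd_apply2]
  · have h3 : ¬ (m 0 + m 1 + m 2 = 3) := by rwa [degree_dd] at hd
    have hfalse : ∀ a b c : ℕ, a + b + c = 3 → ¬ (dd a b c = m) := by
      intro a b c habc hc
      rw [eq_comm, eq_dd_iff] at hc
      omega
    rw [hp.coeff_eq_zero hd]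
    simp only [coeff_add, coeff_monomial]
    rw [if_neg (hfalse 3 0 0 rfl), if_neg (hfalse 0 3 0 rfl), if_neg (hfalse 0 0 3 rfl),
      if_neg (hfalse 2 1 0 rfl), if_neg (hfalse 2 0 1 rfl), if_neg (hfalse 1 2 0 rfl),
      if_neg (hfalse 0 2 1 rfl), if_neg (hfalse 1 0 2 rfl), if_neg (hfalse 0 1 2 rfl),
      if_neg (hfalse 1 1 1 rfl)]
    norm_num

set_option maxHeartbeats 2000000 in
/-- For every cubic form `p`,
`p(ξ₁)² + p(ξ₂)² + p(ξ₃)² + p(ξ₄)² + 4p(ξ₅)² + 4p(ξ₆)² + 4p(ξ₇)² + 4p(ξ₈)² ≥ 2p(ξ₉)²`,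
with equality iff `p ∈ span(p₁, p₂, p₃)` where `p₁ = x₁(x₁²−x₃²)`,
`p₂ = x₂(x₂²−x₃²)` and `p₃ = (3x₁²+3x₂²−4x₃²)x₃`. -/
theorem statement18 (p : MvPolynomial (Fin 3) ℝ) (hp : p.IsHomogeneous 3) :
    2 * eval (xi 8) p ^ 2 ≤
      eval (xi 0) p ^ 2 + eval (xi 1) p ^ 2 + eval (xi 2) p ^ 2 + eval (xi 3) p ^ 2 +
        4 * eval (xi 4) p ^ 2 + 4 * eval (xi 5) p ^ 2 + 4 * eval (xi 6) p ^ 2 +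
        4 * eval (xi 7) p ^ 2 ∧
    (2 * eval (xi 8) p ^ 2 =
        eval (xi 0) p ^ 2 + eval (xi 1) p ^ 2 + eval (xi 2) p ^ 2 + eval (xi 3) p ^ 2 +
          4 * eval (xi 4) p ^ 2 + 4 * eval (xi 5) p ^ 2 + 4 * eval (xi 6) p ^ 2 +
          4 * eval (xi 7) p ^ 2 ↔
      p ∈ Submodule.span ℝ
        ({X 0 * (X 0 ^ 2 - X 2 ^ 2), X 1 * (X 1 ^ 2 - X 2 ^ 2),
          (3 * X 0 ^ 2 + 3 * X 1 ^ 2 - 4 * X 2 ^ 2) * X 2} :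
          Set (MvPolynomial (Fin 3) ℝ))) := by
  have hrep := rep3 p hp
  obtain ⟨a0, ha0⟩ : ∃ a, coeff (dd 3 0 0) p = a := ⟨_, rfl⟩
  obtain ⟨a1, ha1⟩ : ∃ a, coeff (dd 0 3 0) p = a := ⟨_, rfl⟩
  obtain ⟨a2, ha2⟩ : ∃ a, coeff (dd 0 0 3) p = a := ⟨_, rfl⟩
  obtain ⟨a3, ha3⟩ : ∃ a, coeff (dd 2 1 0) p = a := ⟨_, rfl⟩
  obtain ⟨a4, ha4⟩ : ∃ a, coeff (dd 2 0 1) p = a := ⟨_, rfl⟩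
  obtain ⟨a5, ha5⟩ : ∃ a, coeff (dd 1 2 0) p = a := ⟨_, rfl⟩
  obtain ⟨a6, ha6⟩ : ∃ a, coeff (dd 0 2 1) p = a := ⟨_, rfl⟩
  obtain ⟨a7, ha7⟩ : ∃ a, coeff (dd 1 0 2) p = a := ⟨_, rfl⟩
  obtain ⟨a8, ha8⟩ : ∃ a, coeff (dd 0 1 2) p = a := ⟨_, rfl⟩
  obtain ⟨a9, ha9⟩ : ∃ a, coeff (dd 1 1 1) p = a := ⟨_, rfl⟩
  rw [ha0, ha1, ha2, ha3, ha4, ha5, ha6, ha7, ha8, ha9] at hrep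
  rw [mon_eq, mon_eq, mon_eq, mon_eq, mon_eq, mon_eq, mon_eq, mon_eq, mon_eq, mon_eq] at hrep
  have e0 : eval (xi 0) p = a0 + a1 + a2 + a3 + a4 + a5 + a6 + a7 + a8 + a9 := by
    rw [show xi 0 = ![1,1,1] from rfl, hrep]; simp; try ring
  have e1 : eval (xi 1) p = -a0 + a1 + a2 + a3 + a4 - a5 + a6 - a7 + a8 - a9 := by
    rw [show xi 1 = ![-1,1,1] from rfl, hrep]; simp; try ring
  have e2 : eval (xi 2) p = a0 - a1 + a2 - a3 + a4 + a5 + a6 + a7 - a8 - a9 := by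
    rw [show xi 2 = ![1,-1,1] from rfl, hrep]; simp; try ring
  have e3 : eval (xi 3) p = a0 + a1 - a2 + a3 - a4 + a5 - a6 + a7 + a8 - a9 := by
    rw [show xi 3 = ![1,1,-1] from rfl, hrep]; simp; try ring
  have e4 : eval (xi 4) p = a1 + a2 + a6 + a8 := by
    rw [show xi 4 = ![0,1,1] from rfl, hrep]; simp; try ring
  have e5 : eval (xi 5) p = a1 - a2 - a6 + a8 := by
    rw [show xi 5 = ![0,1,-1] from rfl, hrep]; simp; try ring
  have e6 : eval (xi 6) p = a0 + a2 + a4 + a7 := by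
    rw [show xi 6 = ![1,0,1] from rfl, hrep]; simp; try ring
  have e7 : eval (xi 7) p = a0 - a2 - a4 + a7 := by
    rw [show xi 7 = ![1,0,-1] from rfl, hrep]; simp; try ring
  have e8 : eval (xi 8) p = a2 := by
    rw [show xi 8 = ![0,0,1] from rfl, hrep]; simp
  have id1 : ((a0 + a1 + a2 + a3 + a4 + a5 + a6 + a7 + a8 + a9) ^ 2 +
      (-a0 + a1 + a2 + a3 + a4 - a5 + a6 - a7 + a8 - a9) ^ 2 +
      (a0 - a1 + a2 - a3 + a4 + a5 + a6 + a7 - a8 - a9) ^ 2 +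
      (a0 + a1 - a2 + a3 - a4 + a5 - a6 + a7 + a8 - a9) ^ 2 +
      4 * (a1 + a2 + a6 + a8) ^ 2 + 4 * (a1 - a2 - a6 + a8) ^ 2 +
      4 * (a0 + a2 + a4 + a7) ^ 2 + 4 * (a0 - a2 - a4 + a7) ^ 2 - 2 * a2 ^ 2) * 3 =
      4 * (3 * a0 + a5 + 3 * a7) ^ 2 + 4 * (3 * a1 + a3 + 3 * a8) ^ 2 +
      6 * (3 * a2 + 2 * a4 + 2 * a6) ^ 2 + 8 * a3 ^ 2 + 12 * (a4 - a6) ^ 2 +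
      8 * a5 ^ 2 + 12 * a9 ^ 2 := by ring
  refine ⟨?_, ?_, ?_⟩
  · rw [e0, e1, e2, e3, e4, e5, e6, e7, e8]
    linarith [id1, sq_nonneg (3 * a0 + a5 + 3 * a7), sq_nonneg (3 * a1 + a3 + 3 * a8),
      sq_nonneg (3 * a2 + 2 * a4 + 2 * a6), sq_nonneg a3, sq_nonneg (a4 - a6), sq_nonneg a5,
      sq_nonneg a9]
  · intro heq
    rw [e0, e1, e2, e3, e4, e5, e6, e7, e8] at heq
    have hz : 4 * (3 * a0 + a5 + 3 * a7) ^ 2 + 4 * (3 * a1 + a3 + 3 * a8) ^ 2 +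
        6 * (3 * a2 + 2 * a4 + 2 * a6) ^ 2 + 8 * a3 ^ 2 + 12 * (a4 - a6) ^ 2 +
        8 * a5 ^ 2 + 12 * a9 ^ 2 = 0 := by linarith [id1]
    have q1 := sq_nonneg (3 * a0 + a5 + 3 * a7)
    have q2 := sq_nonneg (3 * a1 + a3 + 3 * a8)
    have q3 := sq_nonneg (3 * a2 + 2 * a4 + 2 * a6)
    have q4 := sq_nonneg a3
    have q5 := sq_nonneg (a4 - a6)
    have q6 := sq_nonneg a5
    have q7 := sq_nonneg a9
    have h1 : 3 * a0 + a5 + 3 * a7 = 0 :=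
      sq_eq_zero_iff.mp (le_antisymm (by linarith) q1)
    have h2 : 3 * a1 + a3 + 3 * a8 = 0 :=
      sq_eq_zero_iff.mp (le_antisymm (by linarith) q2)
    have h3 : 3 * a2 + 2 * a4 + 2 * a6 = 0 :=
      sq_eq_zero_iff.mp (le_antisymm (by linarith) q3)
    have h4 : a3 = 0 := sq_eq_zero_iff.mp (le_antisymm (by linarith) q4)
    have h5 : a4 - a6 = 0 := sq_eq_zero_iff.mp (le_antisymm (by linarith) q5)
    have h6 : a5 = 0 := sq_eq_zero_iff.mp (le_antisymm (by linarith) q6)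
    have h7 : a9 = 0 := sq_eq_zero_iff.mp (le_antisymm (by linarith) q7)
    obtain ⟨c, hcdef⟩ : ∃ c, a4 = 3 * c := ⟨a4 / 3, by ring⟩
    have hA : a7 = -a0 := by linarith
    have hB : a8 = -a1 := by linarith
    have hC : a2 = -(4 * c) := by linarith
    have hD : a6 = 3 * c := by linarith
    have hc : p = a0 • (X 0 * (X 0 ^ 2 - X 2 ^ 2)) + a1 • (X 1 * (X 1 ^ 2 - X 2 ^ 2)) +
        c • ((3 * X 0 ^ 2 + 3 * X 1 ^ 2 - 4 * X 2 ^ 2) * X 2) := by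
      rw [hrep, h4, h6, h7, hA, hB, hC, hD, hcdef]
      simp only [smul_eq_C_mul, map_neg, map_mul, map_ofNat, map_zero]
      ring
    rw [hc]
    refine Submodule.add_mem _ (Submodule.add_mem _ ?_ ?_) ?_ <;>
      refine Submodule.smul_mem _ _ (Submodule.subset_span ?_) <;> simp
  · intro h
    rw [Submodule.mem_span_insert] at h
    obtain ⟨r1, z1, hz1, rfl⟩ := h
    rw [Submodule.mem_span_insert] at hz1
    obtain ⟨r2, z2, hz2, rfl⟩ := hz1
    rw [Submodule.mem_span_singleton] at hz2
    obtain ⟨r3, rfl⟩ := hz2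
    rw [show xi 0 = ![1,1,1] from rfl, show xi 1 = ![-1,1,1] from rfl,
      show xi 2 = ![1,-1,1] from rfl, show xi 3 = ![1,1,-1] from rfl,
      show xi 4 = ![0,1,1] from rfl, show xi 5 = ![0,1,-1] from rfl,
      show xi 6 = ![1,0,1] from rfl, show xi 7 = ![1,0,-1] from rfl,
      show xi 8 = ![0,0,1] from rfl]
    simp [smul_eval]
    ring
end
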